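/- arXiv:1407.1116 — 2 statements merged into one kernel-verified Lean document; each statement's English description precedes it below -/
import Mathlib

section
/- There is an absolute constant C such that the following holds. Let d = (d_1,…,d_n) be a degree sequence with m = (∑_v d_v)/2 an integer, m ≥ 3, and max_v d_v < √m / 2. Then the expected number of paths of length 2 enumerated by MinBucket on a graph drawn from ECM(d), namely E[∑_v X_v(X_v − 1)], is at most C·(n + m^{−2}·(∑_v d_v^{4/3})^3). -/
set_option maxHeartbeats 1000000


open Finset

noncomputable section
attribute [local instance] Classical.propDecidable

/-- The perfect matchings of the stub set `Fin N`: fixed-point-free involutions. -/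
def matchings (N : ℕ) : Finset (Equiv.Perm (Fin N)) :=
  Finset.univ.filter fun M => ∀ s, M (M s) = s ∧ M s ≠ s

/-- `φ` is a stub map for the degree sequence `d`: vertex `v` owns exactly `d v` stubs. -/
def IsStubMap {n N : ℕ} (d : Fin n → ℕ) (φ : Fin N → Fin n) : Prop :=
  ∀ v, (Finset.univ.filter fun s => φ s = v).card = d v

/-- Adjacency in the erased (simple) graph: distinct vertices joined by a matched stub pair. -/
def ecmAdj {n N : ℕ} (φ : Fin N → Fin n) (M : Equiv.Perm (Fin N)) (u v : Fin n) : Prop :=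
  u ≠ v ∧ ∃ s, φ s = u ∧ φ (M s) = v

/-- The degree `D_v` of vertex `v` in the erased graph. -/
def ecmDeg {n N : ℕ} (φ : Fin N → Fin n) (M : Equiv.Perm (Fin N)) (v : Fin n) : ℕ :=
  (Finset.univ.filter fun u => ecmAdj φ M u v).card

/-- The edge `(v,w)` is present and lies in `v`'s bucket:
`(D_v, v) ≤ (D_w, w)` lexicographically. -/
def inBucket {n N : ℕ} (φ : Fin N → Fin n) (M : Equiv.Perm (Fin N)) (v w : Fin n) : Prop :=
  ecmAdj φ M v w ∧
    (ecmDeg φ M v < ecmDeg φ M w ∨ (ecmDeg φ M v = ecmDeg φ M w ∧ v ≤ w))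

/-- Indicator `Y_{v,w}` that the edge `(v,w)` is present and in `v`'s bucket. -/
def ecmY {n N : ℕ} (φ : Fin N → Fin n) (M : Equiv.Perm (Fin N)) (v w : Fin n) : ℝ :=
  if inBucket φ M v w then 1 else 0

/-- `X_v`, the number of edges in `v`'s bucket. -/
def ecmX {n N : ℕ} (φ : Fin N → Fin n) (M : Equiv.Perm (Fin N)) (v : Fin n) : ℝ :=
  ∑ w, ecmY φ M v w

/-- Expectation over the uniformly random perfect matching. -/
def ecmExp (N : ℕ) (g : Equiv.Perm (Fin N) → ℝ) : ℝ :=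
  (∑ M ∈ matchings N, g M) / ((matchings N).card : ℝ)

/-- Probability of an event over the uniformly random perfect matching. -/
def ecmProb (N : ℕ) (A : Equiv.Perm (Fin N) → Prop) : ℝ :=
  (((matchings N).filter A).card : ℝ) / ((matchings N).card : ℝ)

namespace MB
variable {N n : ℕ}

lemma mem_matchings {M : Equiv.Perm (Fin N)} :
    M ∈ matchings N ↔ ∀ s, M (M s) = s ∧ M s ≠ s := by
  simp [matchings]

/-- stubs mentioned by a constraint list -/
def stubsOf : List (Fin N × Fin N) → List (Fin N)
  | [] => []
  | c :: C => c.1 :: c.2 :: stubsOf C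

lemma mem_stubsOf {x : Fin N} : ∀ {C : List (Fin N × Fin N)},
    x ∈ stubsOf C ↔ ∃ c ∈ C, x = c.1 ∨ x = c.2
  | [] => by simp [stubsOf]
  | c :: C => by
      simp [stubsOf, @mem_stubsOf x C, or_assoc]

lemma length_stubsOf : ∀ (C : List (Fin N × Fin N)), (stubsOf C).length = 2 * C.length
  | [] => rfl
  | c :: C => by simp [stubsOf, length_stubsOf C]; ring

def pureSat (C : List (Fin N × Fin N)) (M : Equiv.Perm (Fin N)) : Prop :=
  ∀ c ∈ C, M c.1 = c.2

lemma empty_of_clash {C : List (Fin N × Fin N)} {a b : Fin N} {M : Equiv.Perm (Fin N)}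
    (hM : M ∈ matchings N) (ha : a ∉ stubsOf C) (hb : b ∈ stubsOf C)
    (hC : pureSat C M) (hab : M a = b) : False := by
  rw [mem_stubsOf] at hb
  obtain ⟨c, hcC, hcb⟩ := hb
  have hinv := (mem_matchings.1 hM a).1
  have hc := hC c hcC
  rcases hcb with rfl | rfl
  · -- b = c.1 : M b = c.2 and M b = a
    have : a = c.2 := by rw [← hinv, hab, hc]
    exact ha (mem_stubsOf.2 ⟨c, hcC, Or.inr this⟩)
  · -- b = c.2 : M c.1 = b = M a
    have : a = c.1 := M.injective (by rw [hab, hc])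
    exact ha (mem_stubsOf.2 ⟨c, hcC, Or.inl this⟩)

lemma conj_mem_matchings {M : Equiv.Perm (Fin N)} (hM : M ∈ matchings N)
    (σ : Equiv.Perm (Fin N)) (hσ : ∀ s, σ (σ s) = s) : σ * M * σ ∈ matchings N := by
  rw [mem_matchings] at hM ⊢
  intro s
  constructor
  · simp only [Equiv.Perm.mul_apply]
    rw [hσ (M (σ s)), (hM (σ s)).1, hσ s]
  · simp only [Equiv.Perm.mul_apply]
    intro h
    have := congrArg σ h
    rw [hσ (M (σ s))] at this
    exact (hM (σ s)).2 this

/-- peeling one pure constraint -/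
lemma peel (C : List (Fin N × Fin N)) (a b : Fin N) (K : ℕ)
    (hnd : (stubsOf C).Nodup) (ha : a ∉ stubsOf C) (hab : a ≠ b)
    (hK : K + 2 * C.length + 2 ≤ N + 1) :
    K * ((matchings N).filter (fun M => pureSat ((a,b) :: C) M)).card
      ≤ ((matchings N).filter (fun M => pureSat C M)).card := by
  by_cases hb : b ∈ stubsOf C
  · have : ((matchings N).filter (fun M => pureSat ((a,b) :: C) M)) = ∅ := by
      rw [Finset.filter_eq_empty_iff]
      intro M hM hsat
      have hab' : M a = b := hsat (a,b) (List.mem_cons_self)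
      have hCs : pureSat C M := fun c hc => hsat c (List.mem_cons_of_mem _ hc)
      exact empty_of_clash hM ha hb hCs hab'
    simp [this]
  · -- main case
    set T : Finset (Fin N) := Finset.univ \ insert a (stubsOf C).toFinset with hT
    have hbT : b ∈ T := by
      simp only [hT, Finset.mem_sdiff, Finset.mem_univ, true_and, Finset.mem_insert,
        List.mem_toFinset]
      push_neg
      exact ⟨fun h => hab h.symm, hb⟩
    have hTcard : T.card = N - (2 * C.length + 1) := by
      rw [hT, Finset.card_sdiff_of_subset (Finset.subset_univ _)]
      have h1 : a ∉ (stubsOf C).toFinset := by simpa using ha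
      rw [Finset.card_insert_of_notMem h1, List.card_toFinset, hnd.dedup,
        length_stubsOf, Finset.card_univ, Fintype.card_fin]
    -- all fibers over T have the same cardinality
    have hfib : ∀ t ∈ T, ((matchings N).filter (fun M => pureSat C M ∧ M a = t)).card
        = ((matchings N).filter (fun M => pureSat C M ∧ M a = b)).card := by
      intro t ht
      have htprop : t ≠ a ∧ t ∉ stubsOf C := by
        simp only [hT, Finset.mem_sdiff, Finset.mem_univ, true_and, Finset.mem_insert,
          List.mem_toFinset] at ht
        push_neg at ht; exact ht
      set σ := Equiv.swap b t with hσdef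
      have hσinv : ∀ s, σ (σ s) = s := fun s => Equiv.swap_apply_self b t s
      apply Finset.card_bij (fun M _ => σ * M * σ)
      · intro M hMm
        simp only [Finset.mem_filter] at hMm ⊢
        obtain ⟨hMmem, hCs, hMa⟩ := hMm
        refine ⟨conj_mem_matchings hMmem σ hσinv, ?_, ?_⟩
        · intro c hc
          have hc1 : σ c.1 = c.1 := Equiv.swap_apply_of_ne_of_ne
            (fun h => hb (h ▸ mem_stubsOf.2 ⟨c, hc, Or.inl rfl⟩))
            (fun h => htprop.2 (h ▸ mem_stubsOf.2 ⟨c, hc, Or.inl rfl⟩))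
          have hc2 : σ c.2 = c.2 := Equiv.swap_apply_of_ne_of_ne
            (fun h => hb (h ▸ mem_stubsOf.2 ⟨c, hc, Or.inr rfl⟩))
            (fun h => htprop.2 (h ▸ mem_stubsOf.2 ⟨c, hc, Or.inr rfl⟩))
          simp only [Equiv.Perm.mul_apply, hc1, hCs c hc, hc2]
        · have hsa : σ a = a := Equiv.swap_apply_of_ne_of_ne hab
            (fun h => htprop.1 h.symm)
          simp only [Equiv.Perm.mul_apply, hsa, hMa]; simp only [hσdef, Equiv.swap_apply_right]
      · intro M1 h1 M2 h2 heq
        have : ∀ x, M1 x = M2 x := by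
          intro x
          have := congrArg (fun (P : Equiv.Perm (Fin N)) => σ (P (σ x))) heq
          simpa [Equiv.Perm.mul_apply, hσinv] using this
        exact Equiv.ext this
      · intro M hMm
        simp only [Finset.mem_filter] at hMm
        obtain ⟨hMmem, hCs, hMa⟩ := hMm
        refine ⟨σ * M * σ, ?_, ?_⟩
        · simp only [Finset.mem_filter]
          refine ⟨conj_mem_matchings hMmem σ hσinv, ?_, ?_⟩
          · intro c hc
            have hc1 : σ c.1 = c.1 := Equiv.swap_apply_of_ne_of_ne
              (fun h => hb (h ▸ mem_stubsOf.2 ⟨c, hc, Or.inl rfl⟩))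
              (fun h => htprop.2 (h ▸ mem_stubsOf.2 ⟨c, hc, Or.inl rfl⟩))
            have hc2 : σ c.2 = c.2 := Equiv.swap_apply_of_ne_of_ne
              (fun h => hb (h ▸ mem_stubsOf.2 ⟨c, hc, Or.inr rfl⟩))
              (fun h => htprop.2 (h ▸ mem_stubsOf.2 ⟨c, hc, Or.inr rfl⟩))
            simp only [Equiv.Perm.mul_apply, hc1, hCs c hc, hc2]
          · have hsa : σ a = a := Equiv.swap_apply_of_ne_of_ne hab
              (fun h => htprop.1 h.symm)
            simp only [Equiv.Perm.mul_apply, hsa, hMa]; simp only [hσdef, Equiv.swap_apply_left]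
        · exact Equiv.ext fun x => by simp only [Equiv.Perm.mul_apply, hσinv]
    -- sum of fibers bounded by total
    have hsum : ∑ t ∈ T, ((matchings N).filter (fun M => pureSat C M ∧ M a = t)).card
        ≤ ((matchings N).filter (fun M => pureSat C M)).card := by
      have := Finset.card_eq_sum_card_fiberwise
        (f := fun (M : Equiv.Perm (Fin N)) => M a)
        (s := (matchings N).filter (fun M => pureSat C M)) (t := Finset.univ)
        (fun x _ => Finset.mem_univ _)
      rw [this]
      refine Finset.sum_le_sum_of_subset_of_nonneg (Finset.subset_univ T) (fun _ _ _ => Nat.zero_le _)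
        |>.trans_eq ?_ |>.trans_eq rfl
      · apply Finset.sum_congr rfl
        intro t _
        rw [Finset.filter_filter]
    calc K * ((matchings N).filter (fun M => pureSat ((a,b)::C) M)).card
        = K * ((matchings N).filter (fun M => pureSat C M ∧ M a = b)).card := by
          have : ((matchings N).filter (fun M => pureSat ((a,b)::C) M))
              = ((matchings N).filter (fun M => pureSat C M ∧ M a = b)) := by
            apply Finset.filter_congr
            intro M _
            constructor
            · intro h
              exact ⟨fun c hc => h c (List.mem_cons_of_mem _ hc), h (a,b) (List.mem_cons_self)⟩
            · rintro ⟨h1, h2⟩ c hc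
              rcases List.mem_cons.1 hc with rfl | hc'
              · exact h2
              · exact h1 c hc'
          rw [this]
      _ ≤ T.card * ((matchings N).filter (fun M => pureSat C M ∧ M a = b)).card := by
          apply Nat.mul_le_mul_right
          omega
      _ = ∑ t ∈ T, ((matchings N).filter (fun M => pureSat C M ∧ M a = t)).card := by
          rw [Finset.sum_congr rfl hfib, Finset.sum_const, smul_eq_mul]
      _ ≤ _ := hsum

/-- counting matchings satisfying a partial matching constraint -/
lemma pure_count (C : List (Fin N × Fin N)) (K : ℕ)
    (hnd : (stubsOf C).Nodup) (hK : K + 2 * C.length ≤ N + 1) :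
    ((matchings N).filter (fun M => pureSat C M)).card * K ^ C.length
      ≤ (matchings N).card := by
  induction C with
  | nil =>
    simp only [pureSat, List.not_mem_nil, false_implies, implies_true, List.length_nil, pow_zero,
      mul_one]
    exact Finset.card_le_card (Finset.filter_subset _ _)
  | cons c C ih =>
    simp only [stubsOf, List.nodup_cons, mem_stubsOf] at hnd
    obtain ⟨h1, h2, h3⟩ := hnd
    have ha : c.1 ∉ stubsOf C := by
      intro h; exact h1 (List.mem_cons_of_mem _ h)
    have hab : c.1 ≠ c.2 := by
      intro h; exact h1 (h ▸ List.mem_cons_self)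
    simp only [List.length_cons]
    calc ((matchings N).filter (fun M => pureSat ((c.1,c.2) :: C) M)).card * K ^ (C.length + 1)
        = (K * ((matchings N).filter (fun M => pureSat ((c.1,c.2) :: C) M)).card) * K ^ C.length := by
          ring
      _ ≤ ((matchings N).filter (fun M => pureSat C M)).card * K ^ C.length := by
          apply Nat.mul_le_mul_right
          apply peel C c.1 c.2 K h3 ha hab
          simp only [List.length_cons] at hK
          omega
      _ ≤ (matchings N).card := ih h3 (by simp only [List.length_cons] at hK; omega)

def bad (φ : Fin N → Fin n) (v : Fin n) (M : Equiv.Perm (Fin N)) (p : Fin N × Fin N) : Prop :=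
  M p.1 = p.2 ∨ (φ (M p.1) = φ (M p.2) ∧ φ (M p.1) ≠ v)

def TT (φ : Fin N → Fin n) (v : Fin n) : Finset (Fin N × Fin N) :=
  Finset.univ.filter fun q => q.1 ≠ q.2 ∧ φ q.1 = φ q.2 ∧ φ q.1 ≠ v

lemma clm (φ : Fin N → Fin n) (v : Fin n) (L : List (Fin N × Fin N)) :
    ∀ (C : List (Fin N × Fin N)) (K : ℕ),
    (stubsOf C).Nodup →
    (stubsOf L).Nodup →
    (∀ x ∈ stubsOf L, φ x = v) →
    (∀ x ∈ stubsOf C, x ∉ stubsOf L) →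
    (K + 2 * C.length + 4 * L.length ≤ N + 1) →
    K ^ (2 * L.length) *
      ((matchings N).filter (fun M => (∀ p ∈ L, bad φ v M p) ∧ pureSat C M)).card
    ≤ (K + (TT φ v).card) ^ L.length *
        ((matchings N).filter (fun M => pureSat C M)).card := by
  induction L with
  | nil =>
    intro C K hndC _ _ _ _
    have : ((matchings N).filter
        (fun M => (∀ p ∈ ([] : List (Fin N × Fin N)), bad φ v M p) ∧ pureSat C M))
        = ((matchings N).filter (fun M => pureSat C M)) := by
      apply Finset.filter_congr; intro M _; simp
    rw [this]
    simp
  | cons p L ih =>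
    intro C K hndC hndL hLv hdisj hK
    have hstubs : stubsOf (p :: L) = p.1 :: p.2 :: stubsOf L := rfl
    rw [hstubs] at hndL hLv hdisj
    rw [List.nodup_cons, List.nodup_cons] at hndL
    obtain ⟨hp1m, hp2L, hndL'⟩ := hndL
    have hp12 : p.1 ≠ p.2 := fun h => hp1m (h ▸ List.mem_cons_self)
    have hp1L : p.1 ∉ stubsOf L := fun h => hp1m (List.mem_cons_of_mem _ h)
    have hφp1 : φ p.1 = v := hLv p.1 (List.mem_cons_self)
    have hφp2 : φ p.2 = v := hLv p.2 (List.mem_cons_of_mem _ (List.mem_cons_self))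
    have hLv2 : ∀ x ∈ stubsOf L, φ x = v :=
      fun x hx => hLv x (List.mem_cons_of_mem _ (List.mem_cons_of_mem _ hx))
    have hp1C : p.1 ∉ stubsOf C := fun h => (hdisj p.1 h) (List.mem_cons_self)
    have hp2C : p.2 ∉ stubsOf C :=
      fun h => (hdisj p.2 h) (List.mem_cons_of_mem _ (List.mem_cons_self))
    have hdisj2 : ∀ x ∈ stubsOf C, x ∉ stubsOf L :=
      fun x hx hxL => (hdisj x hx) (List.mem_cons_of_mem _ (List.mem_cons_of_mem _ hxL))
    set T := TT φ v with hTdef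
    set cM := fun (C2 : List (Fin N × Fin N)) =>
      ((matchings N).filter (fun M => pureSat C2 M)).card with hcM
    set cE := fun (C2 : List (Fin N × Fin N)) =>
      ((matchings N).filter (fun M => (∀ q ∈ L, bad φ v M q) ∧ pureSat C2 M)).card with hcE
    -- the inclusion
    have hsub : ((matchings N).filter (fun M => (∀ q ∈ p :: L, bad φ v M q) ∧ pureSat C M))
        ⊆ ((matchings N).filter
            (fun M => (∀ q ∈ L, bad φ v M q) ∧ pureSat ((p.1,p.2) :: C) M))
          ∪ T.biUnion (fun q => (matchings N).filter
            (fun M => (∀ r ∈ L, bad φ v M r) ∧ pureSat ((p.1,q.1) :: (p.2,q.2) :: C) M)) := by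
      intro M hM
      simp only [Finset.mem_filter] at hM
      obtain ⟨hMm, hall, hpC⟩ := hM
      have hbadp := hall p (List.mem_cons_self)
      have hallL : ∀ q ∈ L, bad φ v M q := fun q hq => hall q (List.mem_cons_of_mem _ hq)
      rcases hbadp with h1 | ⟨h2, h3⟩
      · apply Finset.mem_union_left
        simp only [Finset.mem_filter]
        refine ⟨hMm, hallL, ?_⟩
        intro c hc
        rcases List.mem_cons.1 hc with rfl | hc2
        · exact h1
        · exact hpC c hc2
      · apply Finset.mem_union_right
        apply Finset.mem_biUnion.2
        refine ⟨(M p.1, M p.2), ?_, ?_⟩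
        · simp only [hTdef, TT, Finset.mem_filter, Finset.mem_univ, true_and]
          exact ⟨fun h => hp12 (M.injective h), h2, h3⟩
        · simp only [Finset.mem_filter]
          refine ⟨hMm, hallL, ?_⟩
          intro c hc
          rcases List.mem_cons.1 hc with rfl | hc2
          · rfl
          rcases List.mem_cons.1 hc2 with rfl | hc3
          · rfl
          · exact hpC c hc3
    -- branch A
    have hbranchA : K ^ (2 * L.length + 2) * cE ((p.1,p.2) :: C)
        ≤ K * ((K + T.card) ^ L.length * cM C) := by
      have h1 := ih ((p.1,p.2) :: C) K
        (by rw [show stubsOf ((p.1,p.2) :: C) = p.1 :: p.2 :: stubsOf C from rfl,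
              List.nodup_cons, List.nodup_cons]
            refine ⟨?_, hp2C, hndC⟩
            intro h
            rcases List.mem_cons.1 h with h2 | h2
            · exact hp12 h2
            · exact hp1C h2)
        hndL' hLv2
        (by intro x hx
            rcases List.mem_cons.1 hx with rfl | hx2
            · exact hp1L
            rcases List.mem_cons.1 hx2 with rfl | hx3
            · exact hp2L
            · exact hdisj2 x hx3)
        (by simp only [List.length_cons] at hK ⊢; omega)
      have h2 : K * cM ((p.1,p.2) :: C) ≤ cM C := by
        apply peel C p.1 p.2 K hndC hp1C hp12
        simp only [List.length_cons] at hK; omega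
      calc K ^ (2 * L.length + 2) * cE ((p.1,p.2) :: C)
          = K * (K * (K ^ (2 * L.length) * cE ((p.1,p.2) :: C))) := by ring
        _ ≤ K * (K * ((K + T.card) ^ L.length * cM ((p.1,p.2) :: C))) :=
            Nat.mul_le_mul_left _ (Nat.mul_le_mul_left _ h1)
        _ = K * ((K + T.card) ^ L.length * (K * cM ((p.1,p.2) :: C))) := by ring
        _ ≤ K * ((K + T.card) ^ L.length * cM C) :=
            Nat.mul_le_mul_left _ (Nat.mul_le_mul_left _ h2)
    -- branch for q ∈ T
    have hbranchQ : ∀ q ∈ T, K ^ (2 * L.length + 2) * cE ((p.1,q.1) :: (p.2,q.2) :: C)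
        ≤ (K + T.card) ^ L.length * cM C := by
      intro q hq
      have hqT : q.1 ≠ q.2 ∧ φ q.1 = φ q.2 ∧ φ q.1 ≠ v := by
        simpa [hTdef, TT] using hq
      obtain ⟨hq12, hqφ, hqv⟩ := hqT
      have hqv2 : φ q.2 ≠ v := by rw [← hqφ]; exact hqv
      have hq1Lm : ∀ x ∈ stubsOf L, q.1 ≠ x := fun x hx h => hqv (by rw [h]; exact hLv2 x hx)
      have hq2Lm : ∀ x ∈ stubsOf L, q.2 ≠ x := fun x hx h => hqv2 (by rw [h]; exact hLv2 x hx)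
      have hq1p1 : p.1 ≠ q.1 := fun h => hqv (by rw [← h]; exact hφp1)
      have hq1p2 : p.2 ≠ q.1 := fun h => hqv (by rw [← h]; exact hφp2)
      have hq2p1 : p.1 ≠ q.2 := fun h => hqv2 (by rw [← h]; exact hφp1)
      have hq2p2 : p.2 ≠ q.2 := fun h => hqv2 (by rw [← h]; exact hφp2)
      by_cases hcl : q.1 ∈ stubsOf C ∨ q.2 ∈ stubsOf C
      · have hzero : cE ((p.1,q.1) :: (p.2,q.2) :: C) = 0 := by
          rw [hcE, Finset.card_eq_zero, Finset.filter_eq_empty_iff]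
          rintro M hMm ⟨hL, hpure⟩
          have e1 : M p.1 = q.1 := hpure _ (List.mem_cons_self)
          have e2 : M p.2 = q.2 := hpure _ (List.mem_cons_of_mem _ (List.mem_cons_self))
          have epC : pureSat C M := fun c hc =>
            hpure c (List.mem_cons_of_mem _ (List.mem_cons_of_mem _ hc))
          rcases hcl with h | h
          · exact empty_of_clash hMm hp1C h epC e1
          · exact empty_of_clash hMm hp2C h epC e2
        rw [hzero, Nat.mul_zero]
        exact Nat.zero_le _
      · push_neg at hcl
        obtain ⟨hq1C, hq2C⟩ := hcl
        have h1 := ih ((p.1,q.1) :: (p.2,q.2) :: C) K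
          (by rw [show stubsOf ((p.1,q.1) :: (p.2,q.2) :: C)
                  = p.1 :: q.1 :: p.2 :: q.2 :: stubsOf C from rfl]
              rw [List.nodup_cons, List.nodup_cons, List.nodup_cons, List.nodup_cons]
              refine ⟨?_, ?_, ?_, hq2C, hndC⟩
              · intro h
                rcases List.mem_cons.1 h with h2 | h2
                · exact hq1p1 h2
                rcases List.mem_cons.1 h2 with h3 | h3
                · exact hp12 h3
                rcases List.mem_cons.1 h3 with h4 | h4
                · exact hq2p1 h4
                · exact hp1C h4
              · intro h
                rcases List.mem_cons.1 h with h2 | h2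
                · exact hq1p2 h2.symm
                rcases List.mem_cons.1 h2 with h3 | h3
                · exact hq12 h3
                · exact hq1C h3
              · intro h
                rcases List.mem_cons.1 h with h2 | h2
                · exact hq2p2 h2
                · exact hp2C h2)
          hndL' hLv2
          (by intro x hx
              rcases List.mem_cons.1 hx with rfl | hx2
              · exact hp1L
              rcases List.mem_cons.1 hx2 with rfl | hx3
              · intro hmem; exact hq1Lm _ hmem rfl
              rcases List.mem_cons.1 hx3 with rfl | hx4
              · exact hp2L
              rcases List.mem_cons.1 hx4 with rfl | hx5
              · intro hmem; exact hq2Lm _ hmem rfl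
              · exact hdisj2 x hx5)
          (by simp only [List.length_cons] at hK ⊢; omega)
        have hpeel1 : K * cM ((p.1,q.1) :: (p.2,q.2) :: C) ≤ cM ((p.2,q.2) :: C) := by
          apply peel ((p.2,q.2) :: C) p.1 q.1 K
          · rw [show stubsOf ((p.2,q.2) :: C) = p.2 :: q.2 :: stubsOf C from rfl,
              List.nodup_cons, List.nodup_cons]
            refine ⟨?_, hq2C, hndC⟩
            intro h
            rcases List.mem_cons.1 h with h2 | h2
            · exact hq2p2 h2
            · exact hp2C h2
          · intro h
            rcases List.mem_cons.1 h with h2 | h2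
            · exact hp12 h2
            rcases List.mem_cons.1 h2 with h3 | h3
            · exact hq2p1 h3
            · exact hp1C h3
          · exact hq1p1
          · simp only [List.length_cons] at hK ⊢; omega
        have hpeel2 : K * cM ((p.2,q.2) :: C) ≤ cM C := by
          apply peel C p.2 q.2 K hndC hp2C hq2p2
          simp only [List.length_cons] at hK; omega
        calc K ^ (2 * L.length + 2) * cE ((p.1,q.1) :: (p.2,q.2) :: C)
            = K * (K * (K ^ (2 * L.length) * cE ((p.1,q.1) :: (p.2,q.2) :: C))) := by ring
          _ ≤ K * (K * ((K + T.card) ^ L.length * cM ((p.1,q.1) :: (p.2,q.2) :: C))) :=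
              Nat.mul_le_mul_left _ (Nat.mul_le_mul_left _ h1)
          _ = (K + T.card) ^ L.length * (K * (K * cM ((p.1,q.1) :: (p.2,q.2) :: C))) := by ring
          _ ≤ (K + T.card) ^ L.length * (K * cM ((p.2,q.2) :: C)) :=
              Nat.mul_le_mul_left _ (Nat.mul_le_mul_left _ hpeel1)
          _ ≤ (K + T.card) ^ L.length * cM C := Nat.mul_le_mul_left _ hpeel2
    -- assemble
    have hcard : ((matchings N).filter
          (fun M => (∀ q ∈ p :: L, bad φ v M q) ∧ pureSat C M)).card
        ≤ cE ((p.1,p.2) :: C) + ∑ q ∈ T, cE ((p.1,q.1) :: (p.2,q.2) :: C) := by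
      calc ((matchings N).filter
            (fun M => (∀ q ∈ p :: L, bad φ v M q) ∧ pureSat C M)).card
          ≤ _ := Finset.card_le_card hsub
        _ ≤ _ := Finset.card_union_le _ _
        _ ≤ cE ((p.1,p.2) :: C) + ∑ q ∈ T, cE ((p.1,q.1) :: (p.2,q.2) :: C) := by
            apply Nat.add_le_add_left
            exact Finset.card_biUnion_le
    calc K ^ (2 * (p :: L).length) * ((matchings N).filter
          (fun M => (∀ q ∈ p :: L, bad φ v M q) ∧ pureSat C M)).card
        = K ^ (2 * L.length + 2) * ((matchings N).filter
          (fun M => (∀ q ∈ p :: L, bad φ v M q) ∧ pureSat C M)).card := by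
          simp only [List.length_cons]
          ring_nf
      _ ≤ K ^ (2 * L.length + 2) *
          (cE ((p.1,p.2) :: C) + ∑ q ∈ T, cE ((p.1,q.1) :: (p.2,q.2) :: C)) :=
          Nat.mul_le_mul_left _ hcard
      _ = K ^ (2 * L.length + 2) * cE ((p.1,p.2) :: C)
          + ∑ q ∈ T, K ^ (2 * L.length + 2) * cE ((p.1,q.1) :: (p.2,q.2) :: C) := by
          rw [Nat.mul_add, Finset.mul_sum]
      _ ≤ K * ((K + T.card) ^ L.length * cM C)
          + ∑ q ∈ T, (K + T.card) ^ L.length * cM C :=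
          Nat.add_le_add hbranchA (Finset.sum_le_sum hbranchQ)
      _ = (K + T.card) ^ (L.length + 1) * cM C := by
          rw [Finset.sum_const, smul_eq_mul]
          ring
      _ = (K + T.card) ^ ((p :: L).length) * cM C := by
          simp only [List.length_cons]
/-- the stubs of a vertex -/
def stubs (φ : Fin N → Fin n) (v : Fin n) : Finset (Fin N) :=
  Finset.univ.filter fun s => φ s = v

lemma adj_symm {φ : Fin N → Fin n} {M : Equiv.Perm (Fin N)} (hM : M ∈ matchings N)
    {u v : Fin n} (h : ecmAdj φ M u v) : ecmAdj φ M v u := by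
  obtain ⟨huv, s, hs1, hs2⟩ := h
  exact ⟨huv.symm, M s, hs2, by rw [(mem_matchings.1 hM s).1]; exact hs1⟩

lemma deg_le_stubs {φ : Fin N → Fin n} {M : Equiv.Perm (Fin N)} (hM : M ∈ matchings N)
    (v : Fin n) : ecmDeg φ M v ≤ (stubs φ v).card := by
  classical
  rcases Nat.eq_zero_or_pos N with hN | hN
  · subst hN
    have : (Finset.univ.filter fun u => ecmAdj φ M u v) = ∅ := by
      rw [Finset.filter_eq_empty_iff]
      rintro u _ ⟨_, s, _⟩
      exact absurd s.2 (by omega)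
    simp [ecmDeg, this]
  · haveI : Nonempty (Fin N) := ⟨⟨0, hN⟩⟩
    have hex : ∀ u ∈ (Finset.univ.filter fun u => ecmAdj φ M u v),
        ∃ s, φ s = u ∧ φ (M s) = v := by
      intro u hu
      simp only [Finset.mem_filter] at hu
      exact hu.2.2
    apply Finset.card_le_card_of_injOn
      (fun u => if h : ∃ s, φ s = u ∧ φ (M s) = v then M (Classical.choose h) else
        Classical.arbitrary (Fin N))
    · intro u hu
      simp only [dif_pos (hex u hu)]
      have := Classical.choose_spec (hex u hu)
      simp only [stubs, Finset.mem_filter, Finset.mem_univ, true_and]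
      simpa using this.2
    · intro u hu u' hu' heq
      have hu2 := Finset.mem_coe.1 hu
      have hu2' := Finset.mem_coe.1 hu'
      simp only [dif_pos (hex u hu2), dif_pos (hex u' hu2')] at heq
      have h1 := Classical.choose_spec (hex u hu2)
      have h2 := Classical.choose_spec (hex u' hu2')
      have := M.injective heq
      rw [← h1.1, ← h2.1, this]

lemma deg_le {φ : Fin N → Fin n} {d : Fin n → ℕ} {M : Equiv.Perm (Fin N)}
    (hM : M ∈ matchings N) (hd : IsStubMap d φ) (v : Fin n) : ecmDeg φ M v ≤ d v := by
  have := deg_le_stubs hM v (φ := φ)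
  rwa [show (stubs φ v).card = d v from hd v] at this

/-- extracting disjoint ordered pairs from a finset -/
lemma pair_extract {α : Type*} [LinearOrder α] :
    ∀ (k : ℕ) (B : Finset α), B.card ≤ k →
    ∃ P : Finset (α × α), P.card = B.card / 2 ∧
      (∀ p ∈ P, p.1 ∈ B ∧ p.2 ∈ B ∧ p.1 < p.2) ∧
      (∀ p ∈ P, ∀ q ∈ P, p ≠ q → p.1 ≠ q.1 ∧ p.1 ≠ q.2 ∧ p.2 ≠ q.1 ∧ p.2 ≠ q.2) := by
  intro k
  induction k with
  | zero =>
    intro B hB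
    refine ⟨∅, ?_, by simp, by simp⟩
    simp only [Finset.card_empty]
    omega
  | succ k ih =>
    intro B hB
    by_cases hB1 : B.card ≤ 1
    · refine ⟨∅, ?_, by simp, by simp⟩
      simp only [Finset.card_empty]
      omega
    · push_neg at hB1
      obtain ⟨a, ha⟩ := Finset.card_pos.1 (by omega : 0 < B.card)
      have hBa : 0 < (B.erase a).card := by
        rw [Finset.card_erase_of_mem ha]; omega
      obtain ⟨b, hb⟩ := Finset.card_pos.1 hBa
      have hba : b ≠ a := Finset.ne_of_mem_erase hb
      have hbB : b ∈ B := Finset.mem_of_mem_erase hb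
      set x := min a b with hx
      set y := max a b with hy
      have hxy : x < y := by
        rcases lt_or_gt_of_ne hba with h | h
        · rw [hx, hy, min_eq_right h.le, max_eq_left h.le]; exact h
        · rw [hx, hy, min_eq_left h.le, max_eq_right h.le]; exact h
      have hxB : x ∈ B := by rcases min_choice a b with h | h <;> rw [hx, h] <;> assumption
      have hyB : y ∈ B := by rcases max_choice a b with h | h <;> rw [hy, h] <;> assumption
      set B2 := (B.erase x).erase y with hB2
      have hB2card : B2.card = B.card - 2 := by
        rw [hB2, Finset.card_erase_of_mem (Finset.mem_erase.2 ⟨hxy.ne', hyB⟩),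
          Finset.card_erase_of_mem hxB]
        omega
      have hmem2 : ∀ z ∈ B2, z ∈ B ∧ z ≠ x ∧ z ≠ y := by
        intro z hz
        rw [hB2] at hz
        have h1 := Finset.mem_of_mem_erase hz
        exact ⟨Finset.mem_of_mem_erase h1, Finset.ne_of_mem_erase h1,
          Finset.ne_of_mem_erase hz⟩
      obtain ⟨P, hP1, hP2, hP3⟩ := ih B2 (by omega)
      refine ⟨insert (x, y) P, ?_, ?_, ?_⟩
      · have hnotin : (x, y) ∉ P := by
          intro h
          exact (hmem2 _ (hP2 _ h).1).2.1 rfl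
        rw [Finset.card_insert_of_notMem hnotin, hP1, hB2card]
        omega
      · intro p hp
        rcases Finset.mem_insert.1 hp with rfl | hp'
        · exact ⟨hxB, hyB, hxy⟩
        · obtain ⟨h1, h2, h3⟩ := hP2 p hp'
          exact ⟨(hmem2 _ h1).1, (hmem2 _ h2).1, h3⟩
      · intro p hp q hq hpq
        rcases Finset.mem_insert.1 hp with rfl | hp' <;>
          rcases Finset.mem_insert.1 hq with h | hq'
        · exact absurd h.symm hpq
        · have h1 := hmem2 _ (hP2 q hq').1
          have h2 := hmem2 _ (hP2 q hq').2.1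
          exact ⟨fun h => h1.2.1 h.symm, fun h => h2.2.1 h.symm,
            fun h => h1.2.2 h.symm, fun h => h2.2.2 h.symm⟩
        · subst h
          have h1 := hmem2 _ (hP2 p hp').1
          have h2 := hmem2 _ (hP2 p hp').2.1
          exact ⟨h1.2.1, h1.2.2, h2.2.1, h2.2.2⟩
        · exact hP3 p hp' q hq' hpq

/-- extracting disjoint ordered matched pairs from an M-invariant finset -/
lemma pairinv_extract {M : Equiv.Perm (Fin N)} (hM : ∀ s, M (M s) = s ∧ M s ≠ s) :
    ∀ (k : ℕ) (B : Finset (Fin N)), B.card ≤ k → (∀ s ∈ B, M s ∈ B) →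
    ∃ P : Finset (Fin N × Fin N), P.card = B.card / 2 ∧
      (∀ p ∈ P, p.1 ∈ B ∧ p.2 ∈ B ∧ p.1 < p.2 ∧ M p.1 = p.2) ∧
      (∀ p ∈ P, ∀ q ∈ P, p ≠ q → p.1 ≠ q.1 ∧ p.1 ≠ q.2 ∧ p.2 ≠ q.1 ∧ p.2 ≠ q.2) := by
  intro k
  induction k with
  | zero =>
    intro B hB _
    refine ⟨∅, ?_, by simp, by simp⟩
    simp only [Finset.card_empty]
    omega
  | succ k ih =>
    intro B hB hinv
    by_cases hB1 : B.card ≤ 1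
    · -- in fact B.card = 0 or 1; either way /2 = 0
      refine ⟨∅, ?_, by simp, by simp⟩
      simp only [Finset.card_empty]
      omega
    · push_neg at hB1
      obtain ⟨a, ha⟩ := Finset.card_pos.1 (by omega : 0 < B.card)
      have hba : M a ≠ a := (hM a).2
      have hbB : M a ∈ B := hinv a ha
      obtain ⟨x, y, hxy, hxB, hyB, hMxy⟩ :
          ∃ x y : Fin N, x < y ∧ x ∈ B ∧ y ∈ B ∧ M x = y := by
        rcases lt_or_gt_of_ne hba with h | h
        · exact ⟨M a, a, h, hbB, ha, (hM a).1⟩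
        · exact ⟨a, M a, h, ha, hbB, rfl⟩
      have hMyx : M y = x := by rw [← hMxy]; exact (hM x).1
      set B2 := (B.erase x).erase y with hB2
      have hB2card : B2.card = B.card - 2 := by
        rw [hB2, Finset.card_erase_of_mem (Finset.mem_erase.2 ⟨hxy.ne', hyB⟩),
          Finset.card_erase_of_mem hxB]
        omega
      have hmem2 : ∀ z ∈ B2, z ∈ B ∧ z ≠ x ∧ z ≠ y := by
        intro z hz
        rw [hB2] at hz
        have h1 := Finset.mem_of_mem_erase hz
        exact ⟨Finset.mem_of_mem_erase h1, Finset.ne_of_mem_erase h1,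
          Finset.ne_of_mem_erase hz⟩
      have hinv2 : ∀ s ∈ B2, M s ∈ B2 := by
        intro s hs
        obtain ⟨hsB, hsx, hsy⟩ := hmem2 s hs
        rw [hB2]
        refine Finset.mem_erase.2 ⟨?_, Finset.mem_erase.2 ⟨?_, hinv s hsB⟩⟩
        · intro h
          exact hsx (by rw [← hMyx, ← h, (hM s).1])
        · intro h
          exact hsy (by rw [← hMxy, ← h, (hM s).1])
      obtain ⟨P, hP1, hP2, hP3⟩ := ih B2 (by omega) hinv2
      refine ⟨insert (x, y) P, ?_, ?_, ?_⟩
      · have hnotin : (x, y) ∉ P := by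
          intro h
          exact (hmem2 _ (hP2 _ h).1).2.1 rfl
        rw [Finset.card_insert_of_notMem hnotin, hP1, hB2card]
        omega
      · intro p hp
        rcases Finset.mem_insert.1 hp with rfl | hp'
        · exact ⟨hxB, hyB, hxy, hMxy⟩
        · obtain ⟨h1, h2, h3, h4⟩ := hP2 p hp'
          exact ⟨(hmem2 _ h1).1, (hmem2 _ h2).1, h3, h4⟩
      · intro p hp q hq hpq
        rcases Finset.mem_insert.1 hp with rfl | hp' <;>
          rcases Finset.mem_insert.1 hq with h | hq'
        · exact absurd h.symm hpq
        · have h1 := hmem2 _ (hP2 q hq').1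
          have h2 := hmem2 _ (hP2 q hq').2.1
          exact ⟨fun h => h1.2.1 h.symm, fun h => h2.2.1 h.symm,
            fun h => h1.2.2 h.symm, fun h => h2.2.2 h.symm⟩
        · subst h
          have h1 := hmem2 _ (hP2 p hp').1
          have h2 := hmem2 _ (hP2 p hp').2.1
          exact ⟨h1.2.1, h1.2.2, h2.2.1, h2.2.2⟩
        · exact hP3 p hp' q hq' hpq

lemma stubsOf_nodup : ∀ (L : List (Fin N × Fin N)), L.Nodup →
    (∀ p ∈ L, p.1 ≠ p.2) →
    (∀ p ∈ L, ∀ q ∈ L, p ≠ q → p.1 ≠ q.1 ∧ p.1 ≠ q.2 ∧ p.2 ≠ q.1 ∧ p.2 ≠ q.2) →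
    (stubsOf L).Nodup
  | [], _, _, _ => List.Pairwise.nil
  | p :: L, hnd, h1, h2 => by
    rw [List.nodup_cons] at hnd
    rw [show stubsOf (p :: L) = p.1 :: p.2 :: stubsOf L from rfl,
      List.nodup_cons, List.nodup_cons]
    refine ⟨?_, ?_, ?_⟩
    · intro h
      rcases List.mem_cons.1 h with h' | h'
      · exact h1 p (List.mem_cons_self) h'
      · obtain ⟨q, hqL, hq⟩ := mem_stubsOf.1 h'
        have hpq : p ≠ q := fun he => hnd.1 (he ▸ hqL)
        have := h2 p (List.mem_cons_self) q (List.mem_cons_of_mem _ hqL) hpq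
        rcases hq with h'' | h''
        · exact this.1 h''
        · exact this.2.1 h''
    · intro h'
      obtain ⟨q, hqL, hq⟩ := mem_stubsOf.1 h'
      have hpq : p ≠ q := fun he => hnd.1 (he ▸ hqL)
      have := h2 p (List.mem_cons_self) q (List.mem_cons_of_mem _ hqL) hpq
      rcases hq with h'' | h''
      · exact this.2.2.1 h''
      · exact this.2.2.2 h''
    · exact stubsOf_nodup L hnd.2 (fun q hq => h1 q (List.mem_cons_of_mem _ hq))
        (fun q hq r hr => h2 q (List.mem_cons_of_mem _ hq) r (List.mem_cons_of_mem _ hr))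

lemma extract {φ : Fin N → Fin n} {M : Equiv.Perm (Fin N)} (hM : M ∈ matchings N) (v : Fin n)
    (hdeg : 2 * ecmDeg φ M v ≤ (stubs φ v).card) :
    ∃ P : Finset (Fin N × Fin N),
      (stubs φ v).card / 4 ≤ P.card ∧
      (∀ p ∈ P, p.1 ∈ stubs φ v ∧ p.2 ∈ stubs φ v ∧ p.1 < p.2) ∧
      (∀ p ∈ P, ∀ q ∈ P, p ≠ q → p.1 ≠ q.1 ∧ p.1 ≠ q.2 ∧ p.2 ≠ q.1 ∧ p.2 ≠ q.2) ∧
      (∀ p ∈ P, bad φ v M p) := by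
  classical
  have hMp := mem_matchings.1 hM
  set Sf : Fin n → Finset (Fin N) := fun u => (stubs φ v).filter (fun s => φ (M s) = u)
    with hSf
  have hmemSf : ∀ u s, s ∈ Sf u ↔ (φ s = v ∧ φ (M s) = u) := by
    intro u s
    simp [hSf, stubs, Finset.mem_filter]
  have hchoice : ∀ u, ∃ Pu : Finset (Fin N × Fin N),
      Pu.card = (Sf u).card / 2 ∧
      (∀ p ∈ Pu, p.1 ∈ Sf u ∧ p.2 ∈ Sf u ∧ p.1 < p.2) ∧
      (∀ p ∈ Pu, ∀ q ∈ Pu, p ≠ q → p.1 ≠ q.1 ∧ p.1 ≠ q.2 ∧ p.2 ≠ q.1 ∧ p.2 ≠ q.2) ∧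
      (∀ p ∈ Pu, bad φ v M p) := by
    intro u
    by_cases hu : u = v
    · subst hu
      have hinv : ∀ s ∈ Sf u, M s ∈ Sf u := by
        intro s hs
        rw [hmemSf] at hs ⊢
        exact ⟨hs.2, by rw [(hMp s).1]; exact hs.1⟩
      obtain ⟨P, hP1, hP2, hP3⟩ := pairinv_extract hMp (Sf u).card (Sf u) le_rfl hinv
      exact ⟨P, hP1, fun p hp => ⟨(hP2 p hp).1, (hP2 p hp).2.1, (hP2 p hp).2.2.1⟩, hP3,
        fun p hp => Or.inl (hP2 p hp).2.2.2⟩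
    · obtain ⟨P, hP1, hP2, hP3⟩ := pair_extract (Sf u).card (Sf u) le_rfl
      refine ⟨P, hP1, hP2, hP3, ?_⟩
      intro p hp
      right
      have h1 := (hmemSf u p.1).1 (hP2 p hp).1
      have h2 := (hmemSf u p.2).1 (hP2 p hp).2.1
      exact ⟨h1.2.trans h2.2.symm, by rw [h1.2]; exact hu⟩
  choose F hF1 hF2 hF3 hF4 using hchoice
  have hSfdisj : ∀ u u', u ≠ u' → ∀ s, s ∈ Sf u → s ∈ Sf u' → False := by
    intro u u' huu s hs hs'
    rw [hmemSf] at hs hs'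
    exact huu (hs.2 ▸ hs'.2 ▸ rfl)
  set P := Finset.univ.biUnion F with hP
  have hPcard : P.card = ∑ u, (F u).card := by
    rw [hP]
    apply Finset.card_biUnion
    intro u _ u' _ huu
    rw [Function.onFun, Finset.disjoint_left]
    intro p hp hp'
    exact hSfdisj u u' huu p.1 (hF2 u p hp).1 (hF2 u' p hp').1
  -- counting
  have hfib : ∑ u, (Sf u).card = (stubs φ v).card := by
    exact (Finset.card_eq_sum_card_fiberwise
      (f := fun s => φ (M s)) (s := stubs φ v) (t := Finset.univ)
      (fun x _ => Finset.mem_univ _)).symm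
  have hAdeg : (Finset.univ.filter (fun u => u ≠ v ∧ (Sf u).Nonempty)).card
      ≤ ecmDeg φ M v := by
    apply Finset.card_le_card
    intro u hu
    simp only [Finset.mem_filter, Finset.mem_univ, true_and] at hu ⊢
    obtain ⟨hne, s, hs⟩ := hu
    rw [hmemSf] at hs
    exact ⟨hne, M s, hs.2, by rw [(hMp s).1]; exact hs.1⟩
  have hpoint : ∀ u, (Sf u).card ≤ 2 * ((Sf u).card / 2)
      + (if u = v then 1 else if (Sf u).Nonempty then 1 else 0) := by
    intro u
    by_cases hu : u = v
    · simp only [hu, if_pos]; omega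
    · rw [if_neg hu]
      by_cases hne : (Sf u).Nonempty
      · rw [if_pos hne]; omega
      · rw [if_neg hne]
        rw [Finset.not_nonempty_iff_eq_empty] at hne
        simp [hne]
  have hsum2 : (stubs φ v).card ≤ 2 * P.card + 1 + ecmDeg φ M v := by
    have h1 : (stubs φ v).card ≤ ∑ u, (2 * ((Sf u).card / 2)
        + (if u = v then 1 else if (Sf u).Nonempty then 1 else 0)) := by
      rw [← hfib]
      exact Finset.sum_le_sum (fun u _ => hpoint u)
    rw [Finset.sum_add_distrib] at h1
    have h2 : ∑ u, 2 * ((Sf u).card / 2) = 2 * P.card := by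
      rw [hPcard, Finset.mul_sum]
      apply Finset.sum_congr rfl
      intro u _
      rw [hF1]
    have h3 : ∑ u, (if u = v then 1 else if (Sf u).Nonempty then 1 else 0)
        ≤ 1 + ecmDeg φ M v := by
      rw [← Finset.add_sum_erase _ _ (Finset.mem_univ v), if_pos rfl]
      apply Nat.add_le_add_left
      calc ∑ u ∈ Finset.univ.erase v, (if u = v then 1 else if (Sf u).Nonempty then 1 else 0)
          = ∑ u ∈ Finset.univ.erase v, (if u ≠ v ∧ (Sf u).Nonempty then 1 else 0) := by
            apply Finset.sum_congr rfl
            intro u hu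
            have hune : u ≠ v := Finset.ne_of_mem_erase hu
            rw [if_neg hune]
            by_cases hne : (Sf u).Nonempty
            · rw [if_pos hne, if_pos ⟨hune, hne⟩]
            · rw [if_neg hne, if_neg (fun h => hne h.2)]
        _ = ((Finset.univ.erase v).filter (fun u => u ≠ v ∧ (Sf u).Nonempty)).card := by
            rw [Finset.card_filter]
        _ ≤ (Finset.univ.filter (fun u => u ≠ v ∧ (Sf u).Nonempty)).card := by
            apply Finset.card_le_card
            exact Finset.filter_subset_filter _ (Finset.erase_subset _ _)
        _ ≤ ecmDeg φ M v := hAdeg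
    omega
  refine ⟨P, by omega, ?_, ?_, ?_⟩
  · intro p hp
    obtain ⟨u, _, hpu⟩ := Finset.mem_biUnion.1 hp
    have h1 := hF2 u p hpu
    refine ⟨Finset.mem_of_mem_filter _ h1.1, Finset.mem_of_mem_filter _ h1.2.1, h1.2.2⟩
  · intro p hp q hq hpq
    obtain ⟨u, _, hpu⟩ := Finset.mem_biUnion.1 hp
    obtain ⟨u', _, hqu⟩ := Finset.mem_biUnion.1 hq
    by_cases huu : u = u'
    · subst huu
      exact hF3 u p hpu q hqu hpq
    · have hp1 := (hF2 u p hpu).1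
      have hp2 := (hF2 u p hpu).2.1
      have hq1 := (hF2 u' q hqu).1
      have hq2 := (hF2 u' q hqu).2.1
      refine ⟨?_, ?_, ?_, ?_⟩ <;>
        · intro h
          first
          | exact hSfdisj u u' huu _ hp1 (h ▸ hq1)
          | exact hSfdisj u u' huu _ hp1 (h ▸ hq2)
          | exact hSfdisj u u' huu _ hp2 (h ▸ hq1)
          | exact hSfdisj u u' huu _ hp2 (h ▸ hq2)
  · intro p hp
    obtain ⟨u, _, hpu⟩ := Finset.mem_biUnion.1 hp
    exact hF4 u p hpu

/-- candidate ordered pairs of stubs of `v` -/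
def PF (φ : Fin N → Fin n) (v : Fin n) : Finset (Fin N × Fin N) :=
  ((stubs φ v) ×ˢ (stubs φ v)).filter fun p => p.1 < p.2

lemma TT_card_le (φ : Fin N → Fin n) (v : Fin n) :
    (TT φ v).card ≤ ∑ u, ((stubs φ u).card) ^ 2 := by
  calc (TT φ v).card
      ≤ (Finset.univ.biUnion (fun u => (stubs φ u) ×ˢ (stubs φ u))).card := by
        apply Finset.card_le_card
        intro q hq
        simp only [TT, Finset.mem_filter, Finset.mem_univ, true_and] at hq
        apply Finset.mem_biUnion.2
        refine ⟨φ q.1, Finset.mem_univ _, ?_⟩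
        rw [Finset.mem_product]
        exact ⟨Finset.mem_filter.2 ⟨Finset.mem_univ _, rfl⟩,
          Finset.mem_filter.2 ⟨Finset.mem_univ _, hq.2.1.symm⟩⟩
    _ ≤ ∑ u, ((stubs φ u) ×ˢ (stubs φ u)).card := Finset.card_biUnion_le
    _ = ∑ u, ((stubs φ u).card) ^ 2 := by
        apply Finset.sum_congr rfl
        intro u _
        rw [Finset.card_product, sq]

lemma PF_card_le (φ : Fin N → Fin n) (v : Fin n) :
    2 * (PF φ v).card ≤ (stubs φ v).card * (stubs φ v).card := by
  have hswap : ((stubs φ v ×ˢ stubs φ v).filter fun p => p.2 < p.1).card = (PF φ v).card := by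
    apply Finset.card_bij (fun p _ => (p.2, p.1))
    · intro p hp
      simp only [Finset.mem_filter, Finset.mem_product, PF] at hp ⊢
      exact ⟨⟨hp.1.2, hp.1.1⟩, hp.2⟩
    · intro p hp q hq h
      simp only [Prod.mk.injEq] at h
      exact Prod.ext h.2 h.1
    · intro p hp
      simp only [Finset.mem_filter, Finset.mem_product, PF] at hp
      exact ⟨(p.2, p.1), by simp only [Finset.mem_filter, Finset.mem_product]
                            exact ⟨⟨hp.1.2, hp.1.1⟩, hp.2⟩, rfl⟩
  have hdisj : Disjoint (PF φ v) ((stubs φ v ×ˢ stubs φ v).filter fun p => p.2 < p.1) := by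
    rw [Finset.disjoint_left]
    intro p hp hp'
    simp only [PF, Finset.mem_filter] at hp hp'
    exact absurd hp'.2 (lt_asymm hp.2)
  have hsub : (PF φ v) ∪ ((stubs φ v ×ˢ stubs φ v).filter fun p => p.2 < p.1)
      ⊆ stubs φ v ×ˢ stubs φ v := by
    apply Finset.union_subset <;> exact Finset.filter_subset _ _
  have := Finset.card_le_card hsub
  rw [Finset.card_union_of_disjoint hdisj, hswap] at this
  rw [← Finset.card_product]
  omega

/-- main counting bound for the bad event at a vertex -/
lemma bcount (φ : Fin N → Fin n) (v : Fin n) (K : ℕ)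
    (hK : K + 4 * ((stubs φ v).card / 4) ≤ N + 1) :
    ((matchings N).filter (fun M => 2 * ecmDeg φ M v ≤ (stubs φ v).card)).card
        * K ^ (2 * ((stubs φ v).card / 4))
      ≤ ((PF φ v).card.choose ((stubs φ v).card / 4))
          * (K + (TT φ v).card) ^ ((stubs φ v).card / 4) * (matchings N).card := by
  classical
  set ℓ := (stubs φ v).card / 4 with hℓ
  set GP := ((PF φ v).powersetCard ℓ).filter
    (fun P => ∀ p ∈ P, ∀ q ∈ P, p ≠ q → p.1 ≠ q.1 ∧ p.1 ≠ q.2 ∧ p.2 ≠ q.1 ∧ p.2 ≠ q.2)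
    with hGP
  have hsub : ((matchings N).filter (fun M => 2 * ecmDeg φ M v ≤ (stubs φ v).card))
      ⊆ GP.biUnion (fun P => (matchings N).filter (fun M => ∀ p ∈ P, bad φ v M p)) := by
    intro M hM
    simp only [Finset.mem_filter] at hM
    obtain ⟨hMm, hMev⟩ := hM
    obtain ⟨P0, hP01, hP02, hP03, hP04⟩ := extract hMm v hMev
    obtain ⟨P, hPsub, hPcard⟩ := Finset.exists_subset_card_eq hP01
    apply Finset.mem_biUnion.2
    refine ⟨P, ?_, ?_⟩
    · simp only [hGP, Finset.mem_filter, Finset.mem_powersetCard]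
      refine ⟨⟨?_, hPcard⟩, ?_⟩
      · intro p hp
        have := hP02 p (hPsub hp)
        simp only [PF, Finset.mem_filter, Finset.mem_product]
        exact ⟨⟨this.1, this.2.1⟩, this.2.2⟩
      · intro p hp q hq hpq
        exact hP03 p (hPsub hp) q (hPsub hq) hpq
    · simp only [Finset.mem_filter]
      exact ⟨hMm, fun p hp => hP04 p (hPsub hp)⟩
  have hper : ∀ P ∈ GP,
      ((matchings N).filter (fun M => ∀ p ∈ P, bad φ v M p)).card * K ^ (2 * ℓ)
        ≤ (K + (TT φ v).card) ^ ℓ * (matchings N).card := by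
    intro P hP
    simp only [hGP, Finset.mem_filter, Finset.mem_powersetCard] at hP
    obtain ⟨⟨hPsub, hPcard⟩, hPdisj⟩ := hP
    have hnodupL : (stubsOf P.toList).Nodup := by
      apply stubsOf_nodup P.toList (Finset.nodup_toList P)
      · intro p hp
        have := hPsub (Finset.mem_toList.1 hp)
        simp only [PF, Finset.mem_filter] at this
        exact ne_of_lt this.2
      · intro p hp q hq hpq
        exact hPdisj p (Finset.mem_toList.1 hp) q (Finset.mem_toList.1 hq) hpq
    have hLv : ∀ x ∈ stubsOf P.toList, φ x = v := by
      intro x hx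
      obtain ⟨p, hpL, hp⟩ := mem_stubsOf.1 hx
      have := hPsub (Finset.mem_toList.1 hpL)
      simp only [PF, Finset.mem_filter, Finset.mem_product, stubs,
        Finset.mem_univ, true_and] at this
      rcases hp with rfl | rfl
      · exact this.1.1
      · exact this.1.2
    have heq : ((matchings N).filter (fun M => ∀ p ∈ P, bad φ v M p))
        = ((matchings N).filter
            (fun M => (∀ p ∈ P.toList, bad φ v M p) ∧ pureSat [] M)) := by
      apply Finset.filter_congr
      intro M _
      simp only [Finset.mem_toList, pureSat, List.not_mem_nil, false_implies, implies_true,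
        and_true]
    have hlen : P.toList.length = ℓ := by rw [Finset.length_toList, hPcard]
    have h := clm φ v P.toList [] K List.Pairwise.nil hnodupL hLv
      (by intro x hx; simp [stubsOf] at hx)
      (by simp only [List.length_nil, Nat.mul_zero, Nat.add_zero, hlen]; omega)
    rw [hlen] at h
    have hMall : ((matchings N).filter (fun M => pureSat [] M)) = matchings N := by
      apply Finset.filter_true_of_mem
      intro M _
      intro c hc
      simp at hc
    rw [hMall] at h
    rw [heq]
    calc ((matchings N).filter
            (fun M => (∀ p ∈ P.toList, bad φ v M p) ∧ pureSat [] M)).card * K ^ (2*ℓ)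
        = K ^ (2*ℓ) * ((matchings N).filter
            (fun M => (∀ p ∈ P.toList, bad φ v M p) ∧ pureSat [] M)).card := by ring
      _ ≤ (K + (TT φ v).card) ^ ℓ * (matchings N).card := h
  calc ((matchings N).filter (fun M => 2 * ecmDeg φ M v ≤ (stubs φ v).card)).card * K ^ (2*ℓ)
      ≤ (GP.biUnion (fun P => (matchings N).filter
          (fun M => ∀ p ∈ P, bad φ v M p))).card * K ^ (2*ℓ) :=
        Nat.mul_le_mul_right _ (Finset.card_le_card hsub)
    _ ≤ (∑ P ∈ GP, ((matchings N).filter (fun M => ∀ p ∈ P, bad φ v M p)).card) * K ^ (2*ℓ) :=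
        Nat.mul_le_mul_right _ Finset.card_biUnion_le
    _ = ∑ P ∈ GP, ((matchings N).filter (fun M => ∀ p ∈ P, bad φ v M p)).card * K ^ (2*ℓ) := by
        rw [Finset.sum_mul]
    _ ≤ ∑ P ∈ GP, (K + (TT φ v).card) ^ ℓ * (matchings N).card := Finset.sum_le_sum hper
    _ = GP.card * ((K + (TT φ v).card) ^ ℓ * (matchings N).card) := by
        rw [Finset.sum_const, smul_eq_mul]
    _ ≤ ((PF φ v).card.choose ℓ) * ((K + (TT φ v).card) ^ ℓ * (matchings N).card) := by
        apply Nat.mul_le_mul_right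
        calc GP.card ≤ ((PF φ v).powersetCard ℓ).card :=
              Finset.card_le_card (Finset.filter_subset _ _)
          _ = (PF φ v).card.choose ℓ := Finset.card_powersetCard _ _
    _ = ((PF φ v).card.choose ℓ) * (K + (TT φ v).card) ^ ℓ * (matchings N).card := by ring

/-- counting bound for a pair of adjacencies -/
lemma adjpair_count (φ : Fin N → Fin n) (v w w' : Fin n)
    (hvw : v ≠ w) (hvw' : v ≠ w') (hww' : w ≠ w') (K : ℕ) (hK : K + 4 ≤ N + 1) :
    ((matchings N).filter (fun M => ecmAdj φ M v w ∧ ecmAdj φ M v w')).card * K ^ 2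
      ≤ (stubs φ v).card * (stubs φ v).card * ((stubs φ w).card * (stubs φ w').card)
          * (matchings N).card := by
  classical
  set Idx := (((stubs φ v) ×ˢ (stubs φ v)).filter fun q => q.1 ≠ q.2)
      ×ˢ ((stubs φ w) ×ˢ (stubs φ w')) with hIdx
  have hsub : ((matchings N).filter (fun M => ecmAdj φ M v w ∧ ecmAdj φ M v w'))
      ⊆ Idx.biUnion (fun q => (matchings N).filter
          (fun M => pureSat [(q.1.1, q.2.1), (q.1.2, q.2.2)] M)) := by
    intro M hM
    simp only [Finset.mem_filter] at hM
    obtain ⟨hMm, ⟨_, s, hs1, hs2⟩, ⟨_, s', hs1', hs2'⟩⟩ := hM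
    have hss' : s ≠ s' := by
      intro h
      rw [h, hs2'] at hs2
      exact hww' hs2.symm
    apply Finset.mem_biUnion.2
    refine ⟨((s, s'), (M s, M s')), ?_, ?_⟩
    · simp only [hIdx, Finset.mem_product, Finset.mem_filter, stubs, Finset.mem_univ, true_and]
      exact ⟨⟨⟨hs1, hs1'⟩, hss'⟩, hs2, hs2'⟩
    · simp only [Finset.mem_filter]
      refine ⟨hMm, ?_⟩
      intro c hc
      rcases List.mem_cons.1 hc with rfl | hc'
      · rfl
      rcases List.mem_cons.1 hc' with rfl | hc''
      · rfl
      · simp at hc''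
  have hper : ∀ q ∈ Idx,
      ((matchings N).filter (fun M => pureSat [(q.1.1, q.2.1), (q.1.2, q.2.2)] M)).card * K ^ 2
        ≤ (matchings N).card := by
    intro q hq
    simp only [hIdx, Finset.mem_product, Finset.mem_filter, stubs, Finset.mem_univ,
      true_and] at hq
    obtain ⟨⟨⟨hq11, hq12⟩, hqne⟩, hq21, hq22⟩ := hq
    have := pure_count [(q.1.1, q.2.1), (q.1.2, q.2.2)] K ?_ ?_
    · simpa using this
    · show (q.1.1 :: q.2.1 :: q.1.2 :: q.2.2 :: ([] : List (Fin N))).Nodup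
      rw [List.nodup_cons, List.nodup_cons, List.nodup_cons]
      refine ⟨?_, ?_, ?_, by simp⟩
      · simp only [List.mem_cons, List.not_mem_nil, or_false]
        push_neg
        refine ⟨?_, ?_, ?_⟩
        · intro h; exact hvw (hq11 ▸ hq21 ▸ h ▸ rfl)
        · exact hqne
        · intro h; exact hvw' (hq11 ▸ hq22 ▸ h ▸ rfl)
      · simp only [List.mem_cons, List.not_mem_nil, or_false]
        push_neg
        refine ⟨?_, ?_⟩
        · intro h; exact hvw (hq12 ▸ hq21 ▸ h.symm ▸ rfl)
        · intro h; exact hww' (hq21 ▸ hq22 ▸ h ▸ rfl)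
      · simp only [List.mem_cons, List.not_mem_nil, or_false]
        intro h
        exact hvw' (hq12 ▸ hq22 ▸ h ▸ rfl)
    · simpa using hK
  calc ((matchings N).filter (fun M => ecmAdj φ M v w ∧ ecmAdj φ M v w')).card * K ^ 2
      ≤ (∑ q ∈ Idx, ((matchings N).filter
          (fun M => pureSat [(q.1.1, q.2.1), (q.1.2, q.2.2)] M)).card) * K ^ 2 :=
        Nat.mul_le_mul_right _ ((Finset.card_le_card hsub).trans Finset.card_biUnion_le)
    _ = ∑ q ∈ Idx, ((matchings N).filter
          (fun M => pureSat [(q.1.1, q.2.1), (q.1.2, q.2.2)] M)).card * K ^ 2 := by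
        rw [Finset.sum_mul]
    _ ≤ ∑ q ∈ Idx, (matchings N).card := Finset.sum_le_sum hper
    _ = Idx.card * (matchings N).card := by rw [Finset.sum_const, smul_eq_mul]
    _ ≤ (stubs φ v).card * (stubs φ v).card * ((stubs φ w).card * (stubs φ w').card)
          * (matchings N).card := by
        apply Nat.mul_le_mul_right
        rw [hIdx, Finset.card_product, Finset.card_product]
        apply Nat.mul_le_mul_right
        calc (((stubs φ v) ×ˢ (stubs φ v)).filter fun q => q.1 ≠ q.2).card
            ≤ ((stubs φ v) ×ˢ (stubs φ v)).card :=
              Finset.card_le_card (Finset.filter_subset _ _)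
          _ = (stubs φ v).card * (stubs φ v).card := Finset.card_product _ _
/-- ℓ^ℓ ≤ ℓ! e^ℓ -/
lemma fact_ge (l : ℕ) : (l:ℝ)^l ≤ (l.factorial : ℝ) * Real.exp 1 ^ l := by
  induction l with
  | zero => simp
  | succ k ih =>
    have hk : ((k+1:ℕ):ℝ) = (k:ℝ)+1 := by push_cast; ring
    have h1 : ((k:ℝ)+1)^k ≤ (k:ℝ)^k * Real.exp 1 := by
      rcases Nat.eq_zero_or_pos k with rfl | hkpos
      · have h := Real.add_one_le_exp (1:ℝ)
        have h2 : (1:ℝ) ≤ Real.exp 1 := by nlinarith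
        simpa using h2
      · have hkr : (0:ℝ) < k := by exact_mod_cast hkpos
        have h2 : (k:ℝ)+1 ≤ (k:ℝ) * Real.exp (1/(k:ℝ)) := by
          have h3 := Real.add_one_le_exp (1/(k:ℝ))
          calc (k:ℝ)+1 = (k:ℝ)*(1/(k:ℝ)+1) := by field_simp; ring
            _ ≤ (k:ℝ) * Real.exp (1/(k:ℝ)) := by
                apply mul_le_mul_of_nonneg_left h3 hkr.le
        calc ((k:ℝ)+1)^k ≤ ((k:ℝ) * Real.exp (1/(k:ℝ)))^k := by
              apply pow_le_pow_left₀ (by positivity) h2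
          _ = (k:ℝ)^k * Real.exp (1/(k:ℝ))^k := mul_pow _ _ _
          _ = (k:ℝ)^k * Real.exp 1 := by
              rw [← Real.exp_nat_mul]
              congr 2
              field_simp
    calc ((k+1:ℕ):ℝ)^(k+1) = ((k:ℝ)+1) * ((k:ℝ)+1)^k := by rw [hk]; ring
      _ ≤ ((k:ℝ)+1) * ((k:ℝ)^k * Real.exp 1) := by
          apply mul_le_mul_of_nonneg_left h1 (by positivity)
      _ ≤ ((k:ℝ)+1) * (((k.factorial : ℝ) * Real.exp 1 ^ k) * Real.exp 1) := by
          apply mul_le_mul_of_nonneg_left _ (by positivity)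
          apply mul_le_mul_of_nonneg_right ih (Real.exp_pos 1).le
      _ = ((k+1).factorial : ℝ) * Real.exp 1 ^ (k+1) := by
          rw [Nat.factorial_succ]
          push_cast
          ring
/-- geometric decay beats dv² -/
lemma geo (l : ℕ) (hl : 30 ≤ l) : ((4*l+3:ℕ):ℝ)^2 ≤ 8 * (4/3)^l := by
  induction l, hl using Nat.le_induction with
  | base =>
    have h3 : (0:ℝ) < 3^(30:ℕ) := by positivity
    rw [show ((4*30+3:ℕ):ℝ) = 123 by norm_num, show ((4:ℝ)/3)^(30:ℕ) = 4^(30:ℕ)/3^(30:ℕ) by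
      rw [div_pow]]
    rw [mul_div_assoc', le_div_iff₀ h3]
    norm_num
  | succ k hk ih =>
    have hkr : (30:ℝ) ≤ (k:ℝ) := by exact_mod_cast hk
    have step : ((4*(k+1)+3:ℕ):ℝ)^2 ≤ (4/3) * ((4*k+3:ℕ):ℝ)^2 := by
      push_cast
      nlinarith [hkr]
    calc ((4*(k+1)+3:ℕ):ℝ)^2 ≤ (4/3) * ((4*k+3:ℕ):ℝ)^2 := step
      _ ≤ (4/3) * (8 * (4/3)^k) := by
          apply mul_le_mul_of_nonneg_left ih (by norm_num)
      _ = 8 * (4/3)^(k+1) := by ring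
/-- scalar core inequality -/
lemma base_core (dv r e : ℝ) (h1 : 121 ≤ dv) (h2 : 2*dv < r)
    (he1 : 0 < e) (he2 : e ≤ 2.7182819) :
    8*e*dv^2*(2*r^2+1+r^2*r) ≤ 3*(dv-3)*(2*r^2-dv)^2 := by
  have hdv0 : (0:ℝ) < dv := by linarith
  have hr : (242:ℝ) < r := by linarith
  have hr0 : (0:ℝ) < r := by linarith
  have hA : 2*r^2+1+r^2*r ≤ (245/242) * (r^2*r) := by nlinarith [sq_nonneg r, mul_pos hr0 hr0]
  have s1 : 8*e*dv^2*(2*r^2+1+r^2*r) ≤ 8*e*dv^2*((245/242)*(r^2*r)) := by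
    have hp : (0:ℝ) ≤ 8*e*dv^2 := by positivity
    exact mul_le_mul_of_nonneg_left hA hp
  have hdv2 : dv^2 ≤ dv*(r/2) := by nlinarith [mul_pos hdv0 (by linarith : (0:ℝ) < r/2 - dv)]
  have s2 : 8*e*dv^2*((245/242)*(r^2*r)) ≤ 8*e*(dv*(r/2))*((245/242)*(r^2*r)) := by
    have h245 : (0:ℝ) ≤ (245/242)*(r^2*r) := by positivity
    have h5 : 8*e*dv^2 ≤ 8*e*(dv*(r/2)) := by
      have h6 : (0:ℝ) ≤ 8*e := by positivity
      exact mul_le_mul_of_nonneg_left hdv2 h6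
    exact mul_le_mul_of_nonneg_right h5 h245
  have key : 8*e*(1/2)*(245/242) ≤ 3*(118/121)*(483/484)*4 := by nlinarith
  have s3 : 8*e*(dv*(r/2))*((245/242)*(r^2*r))
      ≤ (3*(118/121)*(483/484)*4)*(dv*(r^2*r^2)) := by
    have hX : (0:ℝ) ≤ dv*(r^2*r^2) := by positivity
    calc 8*e*(dv*(r/2))*((245/242)*(r^2*r))
        = (8*e*(1/2)*(245/242))*(dv*(r^2*r^2)) := by ring
      _ ≤ (3*(118/121)*(483/484)*4)*(dv*(r^2*r^2)) := mul_le_mul_of_nonneg_right key hX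
  have hdv3 : (118/121)*dv ≤ dv - 3 := by nlinarith
  have hB : (483/484)*(4*(r^2*r^2)) ≤ (2*r^2-dv)^2 := by
    nlinarith [sq_nonneg dv, mul_pos (mul_pos hr0 hr0) hr0,
      mul_pos (mul_pos (mul_pos hr0 hr0) hr0) (by linarith : (0:ℝ) < r - 242),
      mul_pos (mul_pos hr0 hr0) (by linarith : (0:ℝ) < r - 2*dv)]
  have s4 : (3*(118/121)*(483/484)*4)*(dv*(r^2*r^2)) ≤ 3*(dv-3)*(2*r^2-dv)^2 := by
    calc (3*(118/121)*(483/484)*4)*(dv*(r^2*r^2))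
        = (3*((118/121)*dv)) * ((483/484)*(4*(r^2*r^2))) := by ring
      _ ≤ (3*(dv-3)) * ((483/484)*(4*(r^2*r^2))) := by
          apply mul_le_mul_of_nonneg_right (by linarith) (by positivity)
      _ ≤ (3*(dv-3)) * (2*r^2-dv)^2 := by
          apply mul_le_mul_of_nonneg_left hB (by linarith)
      _ = 3*(dv-3)*(2*r^2-dv)^2 := by ring
  linarith


/-- glue: the large-degree bucket bound -/
lemma largeB_bound {dv l K pf T m : ℕ}
    (hdv : 121 ≤ dv)
    (hl4 : 4*l ≤ dv) (hl3 : dv ≤ 4*l+3)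
    (hdvm : (dv:ℝ) < Real.sqrt m / 2)
    (hK : (K:ℝ) = 2*(m:ℝ)+1-4*(l:ℝ))
    (hpf : 2*pf ≤ dv*dv)
    (hT : (T:ℝ) ≤ (m:ℝ) * Real.sqrt m) :
    (dv:ℝ)^2 * (pf.choose l : ℝ) * ((K:ℝ)+(T:ℝ))^l ≤ 8 * (K:ℝ)^(2*l) := by
  have hm0 : (0:ℝ) ≤ (m:ℝ) := Nat.cast_nonneg m
  set r := Real.sqrt m with hrdef
  have hr2 : r^2 = (m:ℝ) := Real.sq_sqrt hm0
  have hdvr : 2*(dv:ℝ) < r := by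
    have := hdvm
    rw [hrdef] at *
    linarith
  have hdv121 : (121:ℝ) ≤ (dv:ℝ) := by exact_mod_cast hdv
  have hr242 : (242:ℝ) < r := by linarith
  have hr0 : (0:ℝ) < r := by linarith
  have hl30 : 30 ≤ l := by omega
  have hl0 : (0:ℝ) < (l:ℝ) := by
    have : 0 < l := by omega
    exact_mod_cast this
  set e := Real.exp 1 with hedef
  have he0 : (0:ℝ) < e := Real.exp_pos 1
  have he2 : e ≤ 2.7182819 := by
    have := Real.exp_one_lt_d9
    rw [hedef]
    linarith
  -- K bounds
  have hdvm2 : (dv:ℝ) ≤ 2*(m:ℝ) := by nlinarith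
  have hKpos : (0:ℝ) < (K:ℝ) := by
    rw [hK]
    have : 4*(l:ℝ) ≤ (dv:ℝ) := by exact_mod_cast hl4
    nlinarith
  have hKlow : 2*(m:ℝ) - (dv:ℝ) ≤ (K:ℝ) := by
    rw [hK]
    have : 4*(l:ℝ) ≤ (dv:ℝ) := by exact_mod_cast hl4
    linarith
  have hKT0 : (0:ℝ) ≤ (K:ℝ)+(T:ℝ) := by positivity
  -- core inequality
  have hcore : 4*(pf:ℝ)*e*((K:ℝ)+(T:ℝ)) ≤ 3*(l:ℝ)*(K:ℝ)^2 := by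
    have hbase := base_core (dv:ℝ) r e hdv121 hdvr he0 he2
    have hpfr : (pf:ℝ) ≤ (dv:ℝ)*(dv:ℝ)/2 := by
      have : (2*pf:ℕ) ≤ (dv*dv:ℕ) := hpf
      have h2 : (2*(pf:ℝ)) ≤ (dv:ℝ)*(dv:ℝ) := by exact_mod_cast this
      linarith
    have hKT : (K:ℝ)+(T:ℝ) ≤ 2*(m:ℝ)+1+(m:ℝ)*r := by
      rw [hK]
      have : (0:ℝ) ≤ 4*(l:ℝ) := by positivity
      linarith
    have hlge : ((dv:ℝ)-3)/4 ≤ (l:ℝ) := by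
      have : (dv:ℝ) ≤ 4*(l:ℝ)+3 := by exact_mod_cast hl3
      linarith
    have hK2 : (2*(m:ℝ)-(dv:ℝ))^2 ≤ (K:ℝ)^2 := by
      apply sq_le_sq'
      · nlinarith
      · exact hKlow
    have hKdv0 : (0:ℝ) ≤ 2*(m:ℝ)-(dv:ℝ) := by nlinarith
    -- rewrite m = r²
    have hsub1 : 2*(m:ℝ)+1+(m:ℝ)*r = 2*r^2+1+r^2*r := by rw [← hr2]
    have hsub2 : (2*(m:ℝ)-(dv:ℝ))^2 = (2*r^2-(dv:ℝ))^2 := by rw [← hr2]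
    calc 4*(pf:ℝ)*e*((K:ℝ)+(T:ℝ))
        ≤ 4*((dv:ℝ)*(dv:ℝ)/2)*e*(2*(m:ℝ)+1+(m:ℝ)*r) := by
          have h1 : 4*(pf:ℝ)*e ≤ 4*((dv:ℝ)*(dv:ℝ)/2)*e := by nlinarith
          have h2 : (0:ℝ) ≤ 4*(pf:ℝ)*e := by positivity
          nlinarith [mul_le_mul h1 hKT hKT0 (by positivity : (0:ℝ) ≤ 4*((dv:ℝ)*(dv:ℝ)/2)*e)]
      _ = 2*e*(dv:ℝ)^2*(2*r^2+1+r^2*r) := by rw [hsub1]; ring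
      _ ≤ (3/4)*((dv:ℝ)-3)*(2*r^2-(dv:ℝ))^2 := by nlinarith [hbase]
      _ ≤ 3*(l:ℝ)*(2*(m:ℝ)-(dv:ℝ))^2 := by
          rw [hsub2]
          have hd3 : (0:ℝ) ≤ (dv:ℝ)-3 := by linarith
          have hsq : (0:ℝ) ≤ (2*r^2-(dv:ℝ))^2 := sq_nonneg _
          nlinarith [mul_le_mul_of_nonneg_right (by linarith : (3/4)*((dv:ℝ)-3) ≤ 3*(l:ℝ)) hsq]
      _ ≤ 3*(l:ℝ)*(K:ℝ)^2 := by
          rw [← hsub2] at *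
          nlinarith [hK2]
  -- now the power chain
  have hfac0 : (0:ℝ) < (l.factorial : ℝ) := by exact_mod_cast l.factorial_pos
  have hchoose : (pf.choose l : ℝ) ≤ (pf:ℝ)^l / (l.factorial:ℝ) := by
    rw [le_div_iff₀ hfac0]
    have h1 : pf.choose l * l.factorial = pf.descFactorial l := by
      rw [Nat.descFactorial_eq_factorial_mul_choose]
      ring
    have h2 : pf.choose l * l.factorial ≤ pf^l := by
      rw [h1]
      exact Nat.descFactorial_le_pow _ _
    exact_mod_cast h2
  have hb : ((pf:ℝ)*((K:ℝ)+(T:ℝ)))^l ≤ ((3*(l:ℝ)*(K:ℝ)^2)/(4*e))^l := by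
    apply pow_le_pow_left₀ (by positivity)
    rw [le_div_iff₀ (by positivity)]
    calc (pf:ℝ)*((K:ℝ)+(T:ℝ))*(4*e) = 4*(pf:ℝ)*e*((K:ℝ)+(T:ℝ)) := by ring
      _ ≤ 3*(l:ℝ)*(K:ℝ)^2 := hcore
  have hfact : (1:ℝ)/(l.factorial:ℝ) ≤ e^l/(l:ℝ)^l := by
    rw [div_le_div_iff₀ hfac0 (by positivity)]
    have := fact_ge l
    nlinarith [this]
  have hmain : (pf.choose l : ℝ) * ((K:ℝ)+(T:ℝ))^l ≤ ((3:ℝ)/4)^l * (K:ℝ)^(2*l) := by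
    calc (pf.choose l : ℝ) * ((K:ℝ)+(T:ℝ))^l
        ≤ ((pf:ℝ)^l / (l.factorial:ℝ)) * ((K:ℝ)+(T:ℝ))^l := by
          apply mul_le_mul_of_nonneg_right hchoose (by positivity)
      _ = ((pf:ℝ)*((K:ℝ)+(T:ℝ)))^l * ((1:ℝ)/(l.factorial:ℝ)) := by
          rw [mul_pow]; ring
      _ ≤ ((3*(l:ℝ)*(K:ℝ)^2)/(4*e))^l * (e^l/(l:ℝ)^l) := by
          apply mul_le_mul hb hfact (by positivity) (by positivity)
      _ = (((3*(l:ℝ)*(K:ℝ)^2)/(4*e)) * (e/(l:ℝ)))^l := by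
          rw [mul_pow]
          congr 1
          rw [div_pow]
      _ = ((3:ℝ)/4*(K:ℝ)^2)^l := by
          congr 1
          field_simp
      _ = ((3:ℝ)/4)^l * (K:ℝ)^(2*l) := by
          rw [mul_pow, ← pow_mul]
  have hgeo : (dv:ℝ)^2 * ((3:ℝ)/4)^l ≤ 8 := by
    have h1 : (dv:ℝ)^2 ≤ ((4*l+3:ℕ):ℝ)^2 := by
      have : (dv:ℝ) ≤ ((4*l+3:ℕ):ℝ) := by exact_mod_cast hl3
      nlinarith
    have h2 := geo l hl30
    have h34 : ((3:ℝ)/4)^l * ((4:ℝ)/3)^l = 1 := by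
      rw [← mul_pow]
      norm_num
    calc (dv:ℝ)^2 * ((3:ℝ)/4)^l ≤ (8 * ((4:ℝ)/3)^l) * ((3:ℝ)/4)^l := by
          apply mul_le_mul_of_nonneg_right (h1.trans h2) (by positivity)
      _ = 8 * (((3:ℝ)/4)^l * ((4:ℝ)/3)^l) := by ring
      _ = 8 := by rw [h34]; norm_num
  calc (dv:ℝ)^2 * (pf.choose l : ℝ) * ((K:ℝ)+(T:ℝ))^l
      = (dv:ℝ)^2 * ((pf.choose l : ℝ) * ((K:ℝ)+(T:ℝ))^l) := by ring
    _ ≤ (dv:ℝ)^2 * (((3:ℝ)/4)^l * (K:ℝ)^(2*l)) := by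
        apply mul_le_mul_of_nonneg_left hmain (by positivity)
    _ = ((dv:ℝ)^2 * ((3:ℝ)/4)^l) * (K:ℝ)^(2*l) := by ring
    _ ≤ 8 * (K:ℝ)^(2*l) := by
        apply mul_le_mul_of_nonneg_right hgeo (by positivity)

/-- AM-GM style bound used in the main term -/
lemma amgm {a b c : ℕ} (ha : 1 ≤ a) (hb : 1 ≤ b) (hc : 1 ≤ c)
    (h1 : a ≤ 2*b) (h2 : a ≤ 2*c) :
    ((a:ℝ))^2 * ((b:ℝ) * (c:ℝ))
      ≤ 2 * ((a:ℝ)^((4:ℝ)/3) * ((b:ℝ)^((4:ℝ)/3) * (c:ℝ)^((4:ℝ)/3))) := by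
  have ha0 : (0:ℝ) < (a:ℝ) := by exact_mod_cast ha
  have hb0 : (0:ℝ) < (b:ℝ) := by exact_mod_cast hb
  have hc0 : (0:ℝ) < (c:ℝ) := by exact_mod_cast hc
  have hab : (a:ℝ) ≤ 2*(b:ℝ) := by exact_mod_cast h1
  have hac : (a:ℝ) ≤ 2*(c:ℝ) := by exact_mod_cast h2
  set x := (a:ℝ); set y := (b:ℝ); set z := (c:ℝ)
  have hx23 : x^((2:ℝ)/3) ≤ (2*y)^((1:ℝ)/3) * (2*z)^((1:ℝ)/3) := by
    have e1 : x^((2:ℝ)/3) = x^((1:ℝ)/3) * x^((1:ℝ)/3) := by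
      rw [← Real.rpow_add ha0]
      norm_num
    rw [e1]
    apply mul_le_mul
    · exact Real.rpow_le_rpow ha0.le hab (by norm_num)
    · exact Real.rpow_le_rpow ha0.le hac (by norm_num)
    · positivity
    · positivity
  have hsplit : x^(2:ℝ) = x^((4:ℝ)/3) * x^((2:ℝ)/3) := by
    rw [← Real.rpow_add ha0]
    norm_num
  have h2y : (2*y)^((1:ℝ)/3) = (2:ℝ)^((1:ℝ)/3) * y^((1:ℝ)/3) :=
    Real.mul_rpow (by norm_num) hb0.le
  have h2z : (2*z)^((1:ℝ)/3) = (2:ℝ)^((1:ℝ)/3) * z^((1:ℝ)/3) :=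
    Real.mul_rpow (by norm_num) hc0.le
  have h22 : (2:ℝ)^((1:ℝ)/3) * (2:ℝ)^((1:ℝ)/3) ≤ 2 := by
    rw [← Real.rpow_add (by norm_num : (0:ℝ) < 2)]
    calc (2:ℝ)^((1:ℝ)/3+(1:ℝ)/3) ≤ (2:ℝ)^((1:ℝ)) := by
          apply Real.rpow_le_rpow_of_exponent_le (by norm_num)
          norm_num
      _ = 2 := Real.rpow_one 2
  have hy43 : y * y^((1:ℝ)/3) = y^((4:ℝ)/3) := by
    nth_rewrite 1 [← Real.rpow_one y]
    rw [← Real.rpow_add hb0]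
    norm_num
  have hz43 : z * z^((1:ℝ)/3) = z^((4:ℝ)/3) := by
    nth_rewrite 1 [← Real.rpow_one z]
    rw [← Real.rpow_add hc0]
    norm_num
  have hx2 : x^(2:ℕ) = x^(2:ℝ) := by
    rw [← Real.rpow_natCast x 2]
    norm_num
  calc x^(2:ℕ) * (y*z) = x^((4:ℝ)/3) * x^((2:ℝ)/3) * (y*z) := by rw [hx2, hsplit]
    _ ≤ x^((4:ℝ)/3) * ((2*y)^((1:ℝ)/3) * (2*z)^((1:ℝ)/3)) * (y*z) := by
        apply mul_le_mul_of_nonneg_right _ (by positivity)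
        apply mul_le_mul_of_nonneg_left hx23 (by positivity)
    _ = ((2:ℝ)^((1:ℝ)/3) * (2:ℝ)^((1:ℝ)/3)) * (x^((4:ℝ)/3) * ((y * y^((1:ℝ)/3)) * (z * z^((1:ℝ)/3)))) := by
        rw [h2y, h2z]
        ring
    _ ≤ 2 * (x^((4:ℝ)/3) * ((y * y^((1:ℝ)/3)) * (z * z^((1:ℝ)/3)))) := by
        apply mul_le_mul_of_nonneg_right h22 (by positivity)
    _ = 2 * (x^((4:ℝ)/3) * (y^((4:ℝ)/3) * z^((4:ℝ)/3))) := by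
        rw [hy43, hz43]

/-- the pointwise split of X(X-1) -/
lemma split {φ : Fin N → Fin n} {d : Fin n → ℕ} {M : Equiv.Perm (Fin N)}
    (hM : M ∈ matchings N) (hd : IsStubMap d φ) (v : Fin n) :
    ecmX φ M v * (ecmX φ M v - 1) ≤
      (∑ w, ∑ w', if (w ≠ w' ∧ d v ≤ 2 * d w ∧ d v ≤ 2 * d w'
          ∧ ecmAdj φ M v w ∧ ecmAdj φ M v w') then (1:ℝ) else 0)
      + (d v : ℝ)^2 * (if 2 * ecmDeg φ M v ≤ d v then (1:ℝ) else 0) := by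
  classical
  set W := Finset.univ.filter (fun w => inBucket φ M v w) with hW
  have hXcard : ecmX φ M v = (W.card : ℝ) := by
    rw [hW, ecmX, Finset.card_filter]
    push_cast
    apply Finset.sum_congr rfl
    intro w _
    rw [ecmY]
  have hsum1nonneg : (0:ℝ) ≤ ∑ w, ∑ w', if (w ≠ w' ∧ d v ≤ 2 * d w ∧ d v ≤ 2 * d w'
      ∧ ecmAdj φ M v w ∧ ecmAdj φ M v w') then (1:ℝ) else 0 := by
    apply Finset.sum_nonneg
    intro w _
    apply Finset.sum_nonneg
    intro w' _
    split <;> norm_num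
  have hWadj : ∀ w ∈ W, ecmAdj φ M v w := by
    intro w hw
    rw [hW, Finset.mem_filter] at hw
    exact hw.2.1
  have hWD : W.card ≤ ecmDeg φ M v := by
    rw [ecmDeg]
    apply Finset.card_le_card
    intro w hw
    simp only [Finset.mem_filter, Finset.mem_univ, true_and]
    exact adj_symm hM (hWadj w hw)
  have hDd : ecmDeg φ M v ≤ d v := deg_le hM hd v
  by_cases hcase : ∃ w ∈ W, 2 * d w < d v
  · obtain ⟨w0, hw0W, hw0⟩ := hcase
    have hbuck : inBucket φ M v w0 := by
      rw [hW, Finset.mem_filter] at hw0W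
      exact hw0W.2
    have hDvw : ecmDeg φ M v ≤ ecmDeg φ M w0 := by
      rcases hbuck.2 with h | h
      · exact h.le
      · exact h.1.le
    have hDw0 : ecmDeg φ M w0 ≤ d w0 := deg_le hM hd w0
    have hev : 2 * ecmDeg φ M v ≤ d v := by omega
    rw [if_pos hev, mul_one]
    have hXD : ecmX φ M v ≤ (d v : ℝ) := by
      rw [hXcard]
      exact_mod_cast hWD.trans hDd
    have hX0 : (0:ℝ) ≤ ecmX φ M v := by rw [hXcard]; positivity
    have : ecmX φ M v * (ecmX φ M v - 1) ≤ (d v:ℝ)^2 := by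
      calc ecmX φ M v * (ecmX φ M v - 1) ≤ ecmX φ M v * ecmX φ M v := by nlinarith
        _ ≤ (d v:ℝ) * (d v:ℝ) := by nlinarith
        _ = (d v:ℝ)^2 := by ring
    linarith
  · push_neg at hcase
    have hback : ∀ w ∈ W, d v ≤ 2 * d w := hcase
    have hpairs : ecmX φ M v * (ecmX φ M v - 1)
        = ∑ w ∈ W, ∑ w' ∈ W.erase w, (1:ℝ) := by
      have hinner : ∀ w ∈ W, ∑ w' ∈ W.erase w, (1:ℝ) = (W.card : ℝ) - 1 := by
        intro w hw
        rw [Finset.sum_const, Finset.card_erase_of_mem hw]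
        have h1 : 1 ≤ W.card := Finset.card_pos.2 ⟨w, hw⟩
        simp [Nat.cast_sub h1]
      rw [Finset.sum_congr rfl hinner, Finset.sum_const, hXcard]
      push_cast
      ring
    rw [hpairs]
    have hterm : ∑ w ∈ W, ∑ w' ∈ W.erase w, (1:ℝ)
        ≤ ∑ w, ∑ w', if (w ≠ w' ∧ d v ≤ 2 * d w ∧ d v ≤ 2 * d w'
          ∧ ecmAdj φ M v w ∧ ecmAdj φ M v w') then (1:ℝ) else 0 := by
      have hstep : ∀ w ∈ W, ∑ w' ∈ W.erase w, (1:ℝ)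
          ≤ ∑ w', if (w ≠ w' ∧ d v ≤ 2 * d w ∧ d v ≤ 2 * d w'
            ∧ ecmAdj φ M v w ∧ ecmAdj φ M v w') then (1:ℝ) else 0 := by
        intro w hw
        calc ∑ w' ∈ W.erase w, (1:ℝ)
            = ∑ w' ∈ W.erase w, if (w ≠ w' ∧ d v ≤ 2 * d w ∧ d v ≤ 2 * d w'
              ∧ ecmAdj φ M v w ∧ ecmAdj φ M v w') then (1:ℝ) else 0 := by
              apply Finset.sum_congr rfl
              intro w' hw'
              have hw'W : w' ∈ W := Finset.mem_of_mem_erase hw'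
              have hne : w ≠ w' := (Finset.ne_of_mem_erase hw').symm
              rw [if_pos ⟨hne, hback w hw, hback w' hw'W, hWadj w hw, hWadj w' hw'W⟩]
          _ ≤ _ := by
              apply Finset.sum_le_sum_of_subset_of_nonneg (Finset.subset_univ _)
              intro w' _ _
              split <;> norm_num
      calc ∑ w ∈ W, ∑ w' ∈ W.erase w, (1:ℝ)
          ≤ ∑ w ∈ W, ∑ w', (if (w ≠ w' ∧ d v ≤ 2 * d w ∧ d v ≤ 2 * d w'
            ∧ ecmAdj φ M v w ∧ ecmAdj φ M v w') then (1:ℝ) else 0) :=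
            Finset.sum_le_sum hstep
        _ ≤ _ := by
            apply Finset.sum_le_sum_of_subset_of_nonneg (Finset.subset_univ _)
            intro w _ _
            apply Finset.sum_nonneg
            intro w' _
            split <;> norm_num
    have hind : (0:ℝ) ≤ (d v : ℝ)^2 * (if 2 * ecmDeg φ M v ≤ d v then (1:ℝ) else 0) := by
      split <;> norm_num <;> positivity
    linarith
lemma matchings_nonempty (m : ℕ) (hm : 1 ≤ m) : 0 < (matchings (2*m)).card := by
  rw [Finset.card_pos]
  have h2m : 0 < 2*m := by omega
  set f : Fin (2*m) → Fin (2*m) := fun i => ⟨(i.1 + m) % (2*m), Nat.mod_lt _ h2m⟩ with hf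
  have hff : ∀ i, f (f i) = i := by
    intro i
    apply Fin.ext
    show ((i.1 + m) % (2*m) + m) % (2*m) = i.1
    rw [Nat.mod_add_mod]
    have h1 : i.1 + m + m = i.1 + 1*(2*m) := by ring
    rw [h1, Nat.add_mul_mod_self_right]
    exact Nat.mod_eq_of_lt i.2
  have hfne : ∀ i, f i ≠ i := by
    intro i h
    have h2 : (i.1 + m) % (2*m) = i.1 := congrArg Fin.val h
    by_cases hi : i.1 + m < 2*m
    · rw [Nat.mod_eq_of_lt hi] at h2
      omega
    · push_neg at hi
      rw [Nat.mod_eq_sub_mod hi, Nat.mod_eq_of_lt (by omega : i.1 + m - 2*m < 2*m)] at h2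
      have := i.2
      omega
  refine ⟨⟨f, f, hff, hff⟩, ?_⟩
  simp only [matchings, Finset.mem_filter, Finset.mem_univ, true_and]
  intro s
  exact ⟨hff s, hfne s⟩

theorem main_bound :
    ∀ (n m : ℕ) (d : Fin n → ℕ) (φ : Fin (2 * m) → Fin n),
      (∀ v, 0 < d v) →
      (∑ v, d v) = 2 * m →
      3 ≤ m →
      (∀ v, (d v : ℝ) < Real.sqrt m / 2) →
      IsStubMap d φ →
      ecmExp (2 * m) (fun M => ∑ v, ecmX φ M v * (ecmX φ M v - 1)) ≤
        14400 * ((n : ℝ) + ((m : ℝ) ^ 2)⁻¹ * (∑ v, (d v : ℝ) ^ ((4 : ℝ) / 3)) ^ 3) := by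
  intro n m d φ hdpos hdsum hm3 hdmax hstub
  classical
  have hstubcard : ∀ v, (stubs φ v).card = d v := fun v => hstub v
  have hcardM : 0 < (matchings (2*m)).card := matchings_nonempty m (by omega)
  have hcardMR : (0:ℝ) < ((matchings (2*m)).card : ℝ) := by exact_mod_cast hcardM
  set S := ∑ v, (d v : ℝ) ^ ((4:ℝ)/3) with hS
  have hdv1R : ∀ v, (1:ℝ) ≤ (d v : ℝ) := by
    intro v
    exact_mod_cast hdpos v
  have hSnn : 0 ≤ S := by
    rw [hS]
    apply Finset.sum_nonneg
    intro v _
    positivity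
  have hd2m : ∀ v, d v ≤ 2*m := by
    intro v
    rw [← hdsum]
    exact Finset.single_le_sum (fun u _ => Nat.zero_le _) (Finset.mem_univ v)
  have hmR : (0:ℝ) < (m:ℝ) := by
    have : 0 < m := by omega
    exact_mod_cast this
  -- the sum over u of d u squared, real bound
  have hQ : ∑ u, ((d u : ℝ))^2 ≤ (m:ℝ) * Real.sqrt m := by
    have h1 : ∀ u, ((d u : ℝ))^2 ≤ (Real.sqrt m / 2) * (d u : ℝ) := by
      intro u
      have h2 := hdmax u
      have h3 : (0:ℝ) ≤ (d u : ℝ) := Nat.cast_nonneg _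
      nlinarith
    calc ∑ u, ((d u : ℝ))^2 ≤ ∑ u, (Real.sqrt m / 2) * (d u : ℝ) :=
          Finset.sum_le_sum (fun u _ => h1 u)
      _ = (Real.sqrt m / 2) * ∑ u, (d u : ℝ) := by rw [Finset.mul_sum]
      _ = (Real.sqrt m / 2) * (2*m : ℝ) := by
          congr 1
          rw [← Nat.cast_sum _ d, hdsum]
          push_cast
          ring
      _ = (m:ℝ) * Real.sqrt m := by ring
  -- Part B : per-vertex bucket-failure bound
  have hBpart : ∀ v, (d v : ℝ)^2 *
      (((matchings (2*m)).filter (fun M => 2 * ecmDeg φ M v ≤ d v)).card : ℝ)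
      ≤ 14400 * ((matchings (2*m)).card : ℝ) := by
    intro v
    by_cases hlarge : 121 ≤ d v
    · -- large degree case
      set l := d v / 4 with hl
      set K := 2*m + 1 - 4*l with hK
      have hl4 : 4*l ≤ d v := by omega
      have hl3 : d v ≤ 4*l + 3 := by omega
      have h4l : 4*l ≤ 2*m := by
        have := hd2m v
        omega
      have hKcast : (K:ℝ) = 2*(m:ℝ)+1-4*(l:ℝ) := by
        rw [hK]
        push_cast [Nat.cast_sub (by omega : 4*l ≤ 2*m+1)]
        ring
      have hbc := bcount φ v K (by rw [hstubcard v, ← hl]; omega)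
      rw [hstubcard v, ← hl] at hbc
      set pf := (PF φ v).card with hpf
      set T := (TT φ v).card with hT
      have hpfle : 2*pf ≤ d v * d v := by
        have := PF_card_le φ v
        rwa [hstubcard v] at this
      have hTle : (T:ℝ) ≤ (m:ℝ) * Real.sqrt m := by
        have h1 : T ≤ ∑ u, (d u)^2 := by
          have := TT_card_le φ v
          have h2 : ∑ u, ((stubs φ u).card)^2 = ∑ u, (d u)^2 := by
            apply Finset.sum_congr rfl
            intro u _
            rw [hstubcard u]
          rw [hT]
          omega
        calc (T:ℝ) ≤ ((∑ u, (d u)^2 : ℕ) : ℝ) := by exact_mod_cast h1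
          _ = ∑ u, ((d u:ℝ))^2 := by push_cast; rfl
          _ ≤ (m:ℝ) * Real.sqrt m := hQ
      have hlarge8 := largeB_bound hlarge hl4 hl3 (hdmax v) hKcast hpfle hTle
      -- convert hbc to reals
      have hbcR : (((matchings (2*m)).filter (fun M => 2 * ecmDeg φ M v ≤ d v)).card : ℝ)
          * (K:ℝ)^(2*l)
          ≤ (pf.choose l : ℝ) * ((K:ℝ)+(T:ℝ))^l * ((matchings (2*m)).card : ℝ) := by
        have := hbc
        have hcast : (((((matchings (2*m)).filter (fun M => 2 * ecmDeg φ M v ≤ d v)).card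
            * K ^ (2*l)) : ℕ) : ℝ)
            ≤ (((pf.choose l) * (K + T) ^ l * (matchings (2*m)).card : ℕ) : ℝ) := by
          exact_mod_cast this
        push_cast at hcast
        convert hcast using 2
      have hKpos : 0 < K := by omega
      have hKposR : (0:ℝ) < (K:ℝ)^(2*l) := by
        have : (0:ℝ) < (K:ℝ) := by exact_mod_cast hKpos
        positivity
      have hfin : (d v : ℝ)^2 *
          (((matchings (2*m)).filter (fun M => 2 * ecmDeg φ M v ≤ d v)).card : ℝ) * (K:ℝ)^(2*l)
          ≤ 8 * ((matchings (2*m)).card : ℝ) * (K:ℝ)^(2*l) := by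
        calc (d v : ℝ)^2 *
            (((matchings (2*m)).filter (fun M => 2 * ecmDeg φ M v ≤ d v)).card : ℝ) * (K:ℝ)^(2*l)
            = (d v : ℝ)^2 * ((((matchings (2*m)).filter
                (fun M => 2 * ecmDeg φ M v ≤ d v)).card : ℝ) * (K:ℝ)^(2*l)) := by ring
          _ ≤ (d v : ℝ)^2 * ((pf.choose l : ℝ) * ((K:ℝ)+(T:ℝ))^l
                * ((matchings (2*m)).card : ℝ)) := by
              apply mul_le_mul_of_nonneg_left hbcR (by positivity)
          _ = ((d v:ℝ)^2 * (pf.choose l : ℝ) * ((K:ℝ)+(T:ℝ))^l)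
                * ((matchings (2*m)).card : ℝ) := by ring
          _ ≤ (8 * (K:ℝ)^(2*l)) * ((matchings (2*m)).card : ℝ) := by
              apply mul_le_mul_of_nonneg_right hlarge8 (by positivity)
          _ = 8 * ((matchings (2*m)).card : ℝ) * (K:ℝ)^(2*l) := by ring
      have h8 : (d v : ℝ)^2 *
          (((matchings (2*m)).filter (fun M => 2 * ecmDeg φ M v ≤ d v)).card : ℝ)
          ≤ 8 * ((matchings (2*m)).card : ℝ) :=
        le_of_mul_le_mul_right hfin hKposR
      linarith [h8]
    · -- small degree case
      push_neg at hlarge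
      have h1 : (((matchings (2*m)).filter (fun M => 2 * ecmDeg φ M v ≤ d v)).card : ℝ)
          ≤ ((matchings (2*m)).card : ℝ) := by
        exact_mod_cast Finset.card_le_card (Finset.filter_subset _ _)
      have h2 : (d v : ℝ)^2 ≤ 14400 := by
        have : (d v : ℝ) ≤ 120 := by exact_mod_cast Nat.lt_succ_iff.mp hlarge
        nlinarith [Nat.cast_nonneg (α := ℝ) (d v)]
      have h3 : (0:ℝ) ≤ (((matchings (2*m)).filter
          (fun M => 2 * ecmDeg φ M v ≤ d v)).card : ℝ) := Nat.cast_nonneg _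
      nlinarith
  -- Part A : per-triple bound
  set a : Fin n → ℝ := fun v => (d v : ℝ)^((4:ℝ)/3) with ha
  have hann : ∀ v, 0 ≤ a v := by
    intro v; rw [ha]; positivity
  have hTriple : ∀ v w w', (∑ M ∈ matchings (2*m),
      if (w ≠ w' ∧ d v ≤ 2 * d w ∧ d v ≤ 2 * d w'
          ∧ ecmAdj φ M v w ∧ ecmAdj φ M v w') then (1:ℝ) else 0)
      ≤ 2 * (a v * (a w * a w')) / (m:ℝ)^2 * ((matchings (2*m)).card : ℝ) := by
    intro v w w'
    have hτnn : 0 ≤ 2 * (a v * (a w * a w')) / (m:ℝ)^2 * ((matchings (2*m)).card : ℝ) := by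
      have := hann v; have := hann w; have := hann w'
      positivity
    by_cases hst : w ≠ w' ∧ d v ≤ 2 * d w ∧ d v ≤ 2 * d w'
    · by_cases hvw : v = w
      · have hzero : ∀ M ∈ matchings (2*m),
            (if (w ≠ w' ∧ d v ≤ 2 * d w ∧ d v ≤ 2 * d w'
              ∧ ecmAdj φ M v w ∧ ecmAdj φ M v w') then (1:ℝ) else 0) = 0 := by
          intro M _
          rw [if_neg]
          rintro ⟨_, _, _, hadj, _⟩
          exact hadj.1 hvw
        rw [Finset.sum_congr rfl hzero, Finset.sum_const, smul_zero]
        exact hτnn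
      · by_cases hvw' : v = w'
        · have hzero : ∀ M ∈ matchings (2*m),
              (if (w ≠ w' ∧ d v ≤ 2 * d w ∧ d v ≤ 2 * d w'
                ∧ ecmAdj φ M v w ∧ ecmAdj φ M v w') then (1:ℝ) else 0) = 0 := by
            intro M _
            rw [if_neg]
            rintro ⟨_, _, _, _, hadj⟩
            exact hadj.1 hvw'
          rw [Finset.sum_congr rfl hzero, Finset.sum_const, smul_zero]
          exact hτnn
        · -- main case
          have hadjc := adjpair_count φ v w w' hvw hvw' hst.1 (2*m-3) (by omega)
          rw [hstubcard v, hstubcard w, hstubcard w'] at hadjc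
          have hmon : ((matchings (2*m)).filter
              (fun M => ecmAdj φ M v w ∧ ecmAdj φ M v w')).card * m^2
              ≤ d v * d v * (d w * d w') * (matchings (2*m)).card := by
            calc ((matchings (2*m)).filter
                (fun M => ecmAdj φ M v w ∧ ecmAdj φ M v w')).card * m^2
                ≤ ((matchings (2*m)).filter
                  (fun M => ecmAdj φ M v w ∧ ecmAdj φ M v w')).card * (2*m-3)^2 := by
                  apply Nat.mul_le_mul_left
                  apply Nat.pow_le_pow_left
                  omega
              _ ≤ _ := hadjc
          have hsum_eq : (∑ M ∈ matchings (2*m),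
              if (w ≠ w' ∧ d v ≤ 2 * d w ∧ d v ≤ 2 * d w'
                ∧ ecmAdj φ M v w ∧ ecmAdj φ M v w') then (1:ℝ) else 0)
              = (((matchings (2*m)).filter
                  (fun M => ecmAdj φ M v w ∧ ecmAdj φ M v w')).card : ℝ) := by
            rw [← Finset.sum_boole]
            apply Finset.sum_congr rfl
            intro M _
            congr 1
            have : (w ≠ w' ∧ d v ≤ 2 * d w ∧ d v ≤ 2 * d w'
                ∧ ecmAdj φ M v w ∧ ecmAdj φ M v w')
                ↔ (ecmAdj φ M v w ∧ ecmAdj φ M v w') := by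
              constructor
              · rintro ⟨_, _, _, h1, h2⟩; exact ⟨h1, h2⟩
              · rintro ⟨h1, h2⟩; exact ⟨hst.1, hst.2.1, hst.2.2, h1, h2⟩
            rw [this]
          rw [hsum_eq]
          have hm2R : (0:ℝ) < (m:ℝ)^2 := by positivity
          rw [div_mul_eq_mul_div, le_div_iff₀ hm2R]
          have hcast : (((matchings (2*m)).filter
              (fun M => ecmAdj φ M v w ∧ ecmAdj φ M v w')).card : ℝ) * (m:ℝ)^2
              ≤ ((d v:ℝ) * (d v:ℝ) * ((d w:ℝ) * (d w':ℝ))) * ((matchings (2*m)).card : ℝ) := by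
            exact_mod_cast hmon
          have hamgm := amgm (hdpos v) (hdpos w) (hdpos w') hst.2.1 hst.2.2
          calc (((matchings (2*m)).filter
              (fun M => ecmAdj φ M v w ∧ ecmAdj φ M v w')).card : ℝ) * (m:ℝ)^2
              ≤ ((d v:ℝ) * (d v:ℝ) * ((d w:ℝ) * (d w':ℝ)))
                  * ((matchings (2*m)).card : ℝ) := hcast
            _ = ((d v:ℝ)^2 * ((d w:ℝ) * (d w':ℝ))) * ((matchings (2*m)).card : ℝ) := by
                ring
            _ ≤ (2 * ((d v:ℝ)^((4:ℝ)/3) * ((d w:ℝ)^((4:ℝ)/3) * (d w':ℝ)^((4:ℝ)/3))))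
                  * ((matchings (2*m)).card : ℝ) := by
                apply mul_le_mul_of_nonneg_right hamgm (by positivity)
            _ = 2 * (a v * (a w * a w')) * ((matchings (2*m)).card : ℝ) := by rw [ha]
    · have hzero : ∀ M ∈ matchings (2*m),
          (if (w ≠ w' ∧ d v ≤ 2 * d w ∧ d v ≤ 2 * d w'
            ∧ ecmAdj φ M v w ∧ ecmAdj φ M v w') then (1:ℝ) else 0) = 0 := by
        intro M _
        rw [if_neg]
        rintro ⟨h1, h2, h3, _, _⟩
        exact hst ⟨h1, h2, h3⟩
      rw [Finset.sum_congr rfl hzero, Finset.sum_const, smul_zero]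
      exact hτnn
  -- numerator bound
  have hnum : ∑ M ∈ matchings (2*m), ∑ v, ecmX φ M v * (ecmX φ M v - 1)
      ≤ (2 / (m:ℝ)^2 * S^3 + 14400 * n) * ((matchings (2*m)).card : ℝ) := by
    have h0 : ∑ M ∈ matchings (2*m), ∑ v, ecmX φ M v * (ecmX φ M v - 1)
        ≤ ∑ M ∈ matchings (2*m), ∑ v,
            ((∑ w, ∑ w', if (w ≠ w' ∧ d v ≤ 2 * d w ∧ d v ≤ 2 * d w'
              ∧ ecmAdj φ M v w ∧ ecmAdj φ M v w') then (1:ℝ) else 0)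
            + (d v : ℝ)^2 * (if 2 * ecmDeg φ M v ≤ d v then (1:ℝ) else 0)) := by
      apply Finset.sum_le_sum
      intro M hM
      apply Finset.sum_le_sum
      intro v _
      exact split hM hstub v
    have h1 : ∑ M ∈ matchings (2*m), ∑ v,
        ((∑ w, ∑ w', if (w ≠ w' ∧ d v ≤ 2 * d w ∧ d v ≤ 2 * d w'
          ∧ ecmAdj φ M v w ∧ ecmAdj φ M v w') then (1:ℝ) else 0)
        + (d v : ℝ)^2 * (if 2 * ecmDeg φ M v ≤ d v then (1:ℝ) else 0))
        = (∑ v, ∑ M ∈ matchings (2*m), (∑ w, ∑ w',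
            if (w ≠ w' ∧ d v ≤ 2 * d w ∧ d v ≤ 2 * d w'
              ∧ ecmAdj φ M v w ∧ ecmAdj φ M v w') then (1:ℝ) else 0))
          + (∑ v, ∑ M ∈ matchings (2*m),
              (d v : ℝ)^2 * (if 2 * ecmDeg φ M v ≤ d v then (1:ℝ) else 0)) := by
      rw [← Finset.sum_add_distrib]
      rw [Finset.sum_comm]
      apply Finset.sum_congr rfl
      intro M _
      rw [Finset.sum_add_distrib]
    -- A-term total
    have hAtot : (∑ v, ∑ M ∈ matchings (2*m), (∑ w, ∑ w',
        if (w ≠ w' ∧ d v ≤ 2 * d w ∧ d v ≤ 2 * d w'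
          ∧ ecmAdj φ M v w ∧ ecmAdj φ M v w') then (1:ℝ) else 0))
        ≤ 2 / (m:ℝ)^2 * S^3 * ((matchings (2*m)).card : ℝ) := by
      have hv : ∀ v, ∑ M ∈ matchings (2*m), (∑ w, ∑ w',
          if (w ≠ w' ∧ d v ≤ 2 * d w ∧ d v ≤ 2 * d w'
            ∧ ecmAdj φ M v w ∧ ecmAdj φ M v w') then (1:ℝ) else 0)
          ≤ ∑ w, ∑ w', 2 * (a v * (a w * a w')) / (m:ℝ)^2
              * ((matchings (2*m)).card : ℝ) := by
        intro v
        rw [Finset.sum_comm]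
        apply Finset.sum_le_sum
        intro w _
        rw [Finset.sum_comm]
        apply Finset.sum_le_sum
        intro w' _
        exact hTriple v w w'
      calc (∑ v, ∑ M ∈ matchings (2*m), (∑ w, ∑ w',
          if (w ≠ w' ∧ d v ≤ 2 * d w ∧ d v ≤ 2 * d w'
            ∧ ecmAdj φ M v w ∧ ecmAdj φ M v w') then (1:ℝ) else 0))
          ≤ ∑ v, ∑ w, ∑ w', 2 * (a v * (a w * a w')) / (m:ℝ)^2
              * ((matchings (2*m)).card : ℝ) :=
            Finset.sum_le_sum (fun v _ => hv v)
        _ = 2 / (m:ℝ)^2 * ((matchings (2*m)).card : ℝ)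
              * (∑ v, ∑ w, ∑ w', a v * (a w * a w')) := by
            rw [Finset.mul_sum]
            apply Finset.sum_congr rfl
            intro v _
            rw [Finset.mul_sum]
            apply Finset.sum_congr rfl
            intro w _
            rw [Finset.mul_sum]
            apply Finset.sum_congr rfl
            intro w' _
            ring
        _ = 2 / (m:ℝ)^2 * ((matchings (2*m)).card : ℝ) * S^3 := by
            congr 1
            have e1 : ∀ v, ∑ w, ∑ w', a v * (a w * a w')
                = a v * ((∑ w, a w) * (∑ w', a w')) := by
              intro v
              rw [Finset.sum_mul_sum, Finset.mul_sum]
              apply Finset.sum_congr rfl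
              intro w _
              rw [Finset.mul_sum]
            rw [Finset.sum_congr rfl (fun v _ => e1 v), ← Finset.sum_mul]
            have hSa : ∑ v, a v = S := by rw [hS, ha]
            rw [hSa]
            ring
        _ = 2 / (m:ℝ)^2 * S^3 * ((matchings (2*m)).card : ℝ) := by ring
    -- B-term total
    have hBtot : (∑ v, ∑ M ∈ matchings (2*m),
        (d v : ℝ)^2 * (if 2 * ecmDeg φ M v ≤ d v then (1:ℝ) else 0))
        ≤ 14400 * (n:ℝ) * ((matchings (2*m)).card : ℝ) := by
      have hv : ∀ v, ∑ M ∈ matchings (2*m),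
          (d v : ℝ)^2 * (if 2 * ecmDeg φ M v ≤ d v then (1:ℝ) else 0)
          ≤ 14400 * ((matchings (2*m)).card : ℝ) := by
        intro v
        have e1 : ∑ M ∈ matchings (2*m),
            (d v : ℝ)^2 * (if 2 * ecmDeg φ M v ≤ d v then (1:ℝ) else 0)
            = (d v : ℝ)^2 * (((matchings (2*m)).filter
                (fun M => 2 * ecmDeg φ M v ≤ d v)).card : ℝ) := by
          rw [← Finset.mul_sum, ← Finset.sum_boole]
        rw [e1]
        exact hBpart v
      calc (∑ v, ∑ M ∈ matchings (2*m),
          (d v : ℝ)^2 * (if 2 * ecmDeg φ M v ≤ d v then (1:ℝ) else 0))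
          ≤ ∑ _v : Fin n, 14400 * ((matchings (2*m)).card : ℝ) :=
            Finset.sum_le_sum (fun v _ => hv v)
        _ = (n:ℝ) * (14400 * ((matchings (2*m)).card : ℝ)) := by
            rw [Finset.sum_const, Finset.card_univ, Fintype.card_fin, nsmul_eq_mul]
        _ = 14400 * (n:ℝ) * ((matchings (2*m)).card : ℝ) := by ring
    calc ∑ M ∈ matchings (2*m), ∑ v, ecmX φ M v * (ecmX φ M v - 1)
        ≤ _ := h0
      _ = _ := h1
      _ ≤ 2 / (m:ℝ)^2 * S^3 * ((matchings (2*m)).card : ℝ)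
          + 14400 * (n:ℝ) * ((matchings (2*m)).card : ℝ) := add_le_add hAtot hBtot
      _ = (2 / (m:ℝ)^2 * S^3 + 14400 * n) * ((matchings (2*m)).card : ℝ) := by ring
  -- conclude
  rw [ecmExp, div_le_iff₀ hcardMR]
  calc ∑ M ∈ matchings (2*m), ∑ v, ecmX φ M v * (ecmX φ M v - 1)
      ≤ (2 / (m:ℝ)^2 * S^3 + 14400 * n) * ((matchings (2*m)).card : ℝ) := hnum
    _ ≤ (14400 * ((n : ℝ) + ((m : ℝ) ^ 2)⁻¹ * S ^ 3)) * ((matchings (2*m)).card : ℝ) := by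
        apply mul_le_mul_of_nonneg_right _ (le_of_lt hcardMR)
        have hS3 : 0 ≤ S^3 := by positivity
        have hm2 : (0:ℝ) < (m:ℝ)^2 := by positivity
        have h1 : 2 / (m:ℝ)^2 * S^3 ≤ 14400 * (((m:ℝ)^2)⁻¹ * S^3) := by
          rw [div_eq_mul_inv]
          have : (0:ℝ) ≤ ((m:ℝ)^2)⁻¹ * S^3 := by positivity
          nlinarith
        linarith

end MB

/-- There is an absolute constant `C` such that for every degree sequence
`d` with `∑ d_v = 2m`, `m ≥ 3` and `max d_v < √m / 2`, the expected number of paths of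
length 2 enumerated by MinBucket over `ECM(d)`, namely `E[∑_v X_v (X_v - 1)]`, is at most
`C (n + m⁻² (∑_v d_v^{4/3})³)`. -/
theorem minBucket_expected_work_bound :
    ∃ C : ℝ, ∀ (n m : ℕ) (d : Fin n → ℕ) (φ : Fin (2 * m) → Fin n),
      (∀ v, 0 < d v) →
      (∑ v, d v) = 2 * m →
      3 ≤ m →
      (∀ v, (d v : ℝ) < Real.sqrt m / 2) →
      IsStubMap d φ →
      ecmExp (2 * m) (fun M => ∑ v, ecmX φ M v * (ecmX φ M v - 1)) ≤
        C * ((n : ℝ) + ((m : ℝ) ^ 2)⁻¹ * (∑ v, (d v : ℝ) ^ ((4 : ℝ) / 3)) ^ 3) := by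
  exact ⟨14400, MB.main_bound⟩
end
end

section
/- There exist constants β, β′ ∈ (0,1) such that the following holds. Let d = (d_1,…,d_n) be a degree sequence with m = (∑_v d_v)/2 an integer and max_v d_v < √m / 2, and let G be drawn from ECM(d). Then for every vertex v, P[D_v < β′ d_v] < exp(−β d_v). (In fact one may take β′ = 1/8 and β = 1/72.) -/
open Finset

noncomputable section
attribute [local instance] Classical.propDecidable
set_option maxHeartbeats 1000000

namespace ECMAux

variable {n N : ℕ}

lemma mem_matchings {M : Equiv.Perm (Fin N)} :
    M ∈ matchings N ↔ ∀ s, M (M s) = s ∧ M s ≠ s := by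
  simp [matchings]

lemma minv {M : Equiv.Perm (Fin N)} (hM : M ∈ matchings N) (s : Fin N) : M (M s) = s :=
  ((mem_matchings.1 hM) s).1

lemma mne {M : Equiv.Perm (Fin N)} (hM : M ∈ matchings N) (s : Fin N) : M s ≠ s :=
  ((mem_matchings.1 hM) s).2

lemma conj_mem_matchings {M : Equiv.Perm (Fin N)} (hM : M ∈ matchings N) (a b : Fin N) :
    (Equiv.swap a b) * M * (Equiv.swap a b) ∈ matchings N := by
  rw [mem_matchings]
  intro s
  constructor
  · simp [Equiv.Perm.mul_apply, Equiv.swap_apply_self, minv hM]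
  · simp only [Equiv.Perm.mul_apply]
    intro h
    have h2 : M (Equiv.swap a b s) = Equiv.swap a b s := by
      have := congrArg (Equiv.swap a b) h
      simpa [Equiv.swap_apply_self] using this
    exact mne hM _ h2

lemma addm_eq (m : ℕ) (x : Fin (2*m)) :
    (x.val + m) % (2*m) = if x.val < m then x.val + m else x.val - m := by
  have hx := x.isLt
  split_ifs with h
  · exact Nat.mod_eq_of_lt (by omega)
  · have h1 : x.val + m = (x.val - m) + 2*m := by omega
    rw [h1, Nat.add_mod_right]
    exact Nat.mod_eq_of_lt (by omega)

def baseInv (m : ℕ) (hm : 0 < m) : Function.Involutive (fun x : Fin (2*m) => x + ⟨m, by omega⟩) := by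
  intro x
  rw [Fin.ext_iff]
  simp only [Fin.add_def]
  have h1 := addm_eq m x
  have hx := x.isLt
  rcases Nat.lt_or_ge x.val m with h | h
  · rw [if_pos h] at h1
    rw [h1]
    have h2 : x.val + m + m = x.val + 2*m := by ring
    rw [h2, Nat.add_mod_right]
    exact Nat.mod_eq_of_lt hx
  · rw [if_neg (by omega)] at h1
    rw [h1]
    have h2 : x.val - m + m = x.val := by omega
    rw [h2]
    exact Nat.mod_eq_of_lt hx

def baseMatch (m : ℕ) (hm : 0 < m) : Equiv.Perm (Fin (2*m)) :=
  (baseInv m hm).toPerm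

lemma baseMatch_mem (m : ℕ) (hm : 0 < m) : baseMatch m hm ∈ matchings (2*m) := by
  rw [mem_matchings]
  intro s
  have hc : ⇑(baseMatch m hm) = (fun x : Fin (2*m) => x + ⟨m, by omega⟩) :=
    Function.Involutive.coe_toPerm _
  constructor
  · rw [hc]
    exact baseInv m hm s
  · rw [hc]
    intro h
    have h2 := congrArg Fin.val h
    simp only [Fin.add_def] at h2
    rw [addm_eq m s] at h2
    have hx := s.isLt
    split_ifs at h2 <;> omega


def VS (φ : Fin N → Fin n) (v : Fin n) : Finset (Fin N) := univ.filter fun s => φ s = v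

def freshP (φ : Fin N → Fin n) (v : Fin n) (M : Equiv.Perm (Fin N)) (s : Fin N) : Prop :=
  φ (M s) ≠ v ∧ ∀ t ∈ VS φ v, t < s → φ (M t) ≠ φ (M s)

def freshSet (φ : Fin N → Fin n) (v : Fin n) (M : Equiv.Perm (Fin N)) : Finset (Fin N) :=
  (VS φ v).filter (freshP φ v M)

def badSet (φ : Fin N → Fin n) (v : Fin n) (U : Finset (Fin N)) (M : Equiv.Perm (Fin N)) :
    Finset (Fin N) :=
  U.filter fun s => ¬ freshP φ v M s ∧ ¬ (M s ∈ U ∧ M s < s)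

def Ext (M₀ : Equiv.Perm (Fin N)) (D : Finset (Fin N)) : Finset (Equiv.Perm (Fin N)) :=
  (matchings N).filter fun M => ∀ x ∈ D, M x = M₀ x

def Evt (φ : Fin N → Fin n) (v : Fin n) (k : ℕ) (U : Finset (Fin N)) (b : ℕ)
    (M : Equiv.Perm (Fin N)) : Prop :=
  (freshSet φ v M).card ≤ k ∧ b ≤ (badSet φ v U M).card

lemma ext_mem {M₀ : Equiv.Perm (Fin N)} {D : Finset (Fin N)} {M : Equiv.Perm (Fin N)} :
    M ∈ Ext M₀ D ↔ M ∈ matchings N ∧ ∀ x ∈ D, M x = M₀ x := by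
  simp [Ext]

lemma ext_not_mem_D {M₀ : Equiv.Perm (Fin N)} {D : Finset (Fin N)}
    (hcl : ∀ x ∈ D, M₀ x ∈ D) {M : Equiv.Perm (Fin N)} (hM : M ∈ Ext M₀ D)
    {x : Fin N} (hx : x ∉ D) : M x ∉ D := by
  intro hMx
  rw [ext_mem] at hM
  have h1 : M (M x) = M₀ (M x) := hM.2 _ hMx
  rw [minv hM.1] at h1
  exact hx (h1 ▸ hcl _ hMx)

/-- Exchange lemma: all fibers of `M ↦ M s` over `Ext M₀ D` have the same size. -/
lemma fiber_card (M₀ : Equiv.Perm (Fin N)) (hM₀ : M₀ ∈ matchings N) (D : Finset (Fin N))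
    (hcl : ∀ x ∈ D, M₀ x ∈ D) (s : Fin N) (hs : s ∉ D) (s' : Fin N)
    (hs'D : s' ∉ D) (hss : s' ≠ s) :
    (N - D.card - 1) * ((Ext M₀ D).filter fun M => M s = s').card = (Ext M₀ D).card := by
  classical
  set T : Finset (Fin N) := univ \ insert s D with hT
  have hTcard : T.card = N - D.card - 1 := by
    rw [hT, card_sdiff_of_subset (subset_univ _), card_univ, Fintype.card_fin,
      card_insert_of_notMem hs]
    omega
  have hmap : ∀ M ∈ Ext M₀ D, M s ∈ T := by
    intro M hM
    have h1 : M s ∉ D := ext_not_mem_D hcl hM hs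
    have h2 : M s ≠ s := mne (ext_mem.1 hM).1 s
    simp [hT, mem_sdiff, h1, h2]
  have hpart := Finset.card_eq_sum_card_fiberwise hmap
  -- each fiber has the same card as the fiber of s'
  have hfib : ∀ s'' ∈ T, ((Ext M₀ D).filter fun M => M s = s'').card
      = ((Ext M₀ D).filter fun M => M s = s').card := by
    intro s'' hs''
    have hs''D : s'' ∉ D := by
      simp only [hT, mem_sdiff, mem_insert] at hs''
      tauto
    have hs''s : s'' ≠ s := by
      simp only [hT, mem_sdiff, mem_insert] at hs''
      tauto
    set σ := Equiv.swap s' s'' with hσ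
    have hσD : ∀ x ∈ D, σ x = x := by
      intro x hx
      exact Equiv.swap_apply_of_ne_of_ne (by rintro rfl; exact hs'D hx)
        (by rintro rfl; exact hs''D hx)
    have hσs : σ s = s := Equiv.swap_apply_of_ne_of_ne (Ne.symm hss) (Ne.symm hs''s)
    have key : ∀ a b : Fin N, a ∉ D → a ≠ s →
        ∀ M ∈ (Ext M₀ D).filter (fun M => M s = a), (σ * M * σ) ∈
          (Ext M₀ D).filter fun M => M s = σ a := by
      intro a b ha has M hM
      rw [mem_filter] at hM
      obtain ⟨hME, hMs⟩ := hM
      rw [ext_mem] at hME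
      rw [mem_filter, ext_mem]
      refine ⟨⟨conj_mem_matchings hME.1 s' s'', ?_⟩, ?_⟩
      · intro x hx
        have hMx : M x = M₀ x := hME.2 x hx
        simp only [Equiv.Perm.mul_apply, hσD x hx, hMx, hσD _ (hcl x hx)]
      · simp only [Equiv.Perm.mul_apply, hσs, hMs]
    -- bijection between fiber s'' and fiber s'
    apply Finset.card_bij (fun M _ => σ * M * σ)
    · intro M hM
      have := key s'' s' hs''D hs''s M hM
      rwa [hσ, Equiv.swap_apply_right] at this
    · intro M₁ h₁ M₂ h₂ he
      have : σ * (σ * M₁ * σ) * σ = σ * (σ * M₂ * σ) * σ := by rw [he]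
      simpa [mul_assoc, Equiv.swap_mul_self] using this
    · intro M hM
      refine ⟨σ * M * σ, ?_, ?_⟩
      · have := key s' s'' hs'D (Ne.symm (Ne.symm hss)) M hM
        rwa [hσ, Equiv.swap_apply_left] at this
      · simp only [← mul_assoc]
        rw [mul_assoc (σ * σ * M) σ σ, hσ, Equiv.swap_mul_self]
        simp
  rw [hpart]
  rw [Finset.sum_congr rfl hfib, Finset.sum_const, hTcard, smul_eq_mul]


/-- The number of distinct non-`v` vertices seen on a downward-closed set `A` of `v`-stubs
is at most the number of fresh stubs. -/
lemma card_image_le_fresh (φ : Fin N → Fin n) (v : Fin n) (M : Equiv.Perm (Fin N))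
    (A : Finset (Fin N)) (hA : A ⊆ VS φ v)
    (hdc : ∀ t ∈ VS φ v, ∀ a ∈ A, t < a → t ∈ A) :
    ((A.image fun t => φ (M t)).erase v).card ≤ (freshSet φ v M).card := by
  classical
  apply Finset.card_le_card_of_surjOn (fun s => φ (M s))
  intro u hu
  have hune : u ≠ v := ne_of_mem_erase hu
  obtain ⟨t, ht, hφt⟩ := mem_image.1 (mem_of_mem_erase hu)
  have hne : (A.filter fun t => φ (M t) = u).Nonempty := ⟨t, mem_filter.2 ⟨ht, hφt⟩⟩
  set t₀ := (A.filter fun t => φ (M t) = u).min' hne with ht₀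
  have ht₀mem := Finset.min'_mem _ hne
  rw [← ht₀, mem_filter] at ht₀mem
  refine ⟨t₀, ?_, ht₀mem.2⟩
  simp only [Finset.mem_coe, freshSet, mem_filter]
  refine ⟨hA ht₀mem.1, ?_, ?_⟩
  · rw [ht₀mem.2]; exact hune
  · intro t' ht' hlt heq
    rw [ht₀mem.2] at heq
    have ht'A : t' ∈ A := hdc t' ht' t₀ ht₀mem.1 hlt
    have : t₀ ≤ t' := Finset.min'_le _ _ (mem_filter.2 ⟨ht'A, heq⟩)
    exact absurd hlt (not_lt.2 this)

/-- Fresh stubs inject into neighbours of `v`. -/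
lemma fresh_card_le_deg (φ : Fin N → Fin n) (v : Fin n) (M : Equiv.Perm (Fin N))
    (hM : M ∈ matchings N) :
    (freshSet φ v M).card ≤ ecmDeg φ M v := by
  classical
  apply Finset.card_le_card_of_injOn (fun s => φ (M s))
  · intro s hs
    simp only [Finset.mem_coe, freshSet, VS, mem_filter, mem_univ, true_and] at hs
    obtain ⟨hsv, hfresh⟩ := hs
    simp only [ecmDeg, Finset.mem_coe, mem_filter, mem_univ, true_and]
    refine ⟨hfresh.1, M s, rfl, ?_⟩
    rw [minv hM, hsv]
  · intro s1 h1 s2 h2 he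
    simp only [Finset.mem_coe, freshSet, VS, mem_filter, mem_univ, true_and] at h1 h2
    by_contra hne
    rcases lt_trichotomy s1 s2 with h | h | h
    · exact h2.2.2 s1 (by simp [VS, h1.1]) h he
    · exact hne h
    · exact h1.2.2 s2 (by simp [VS, h2.1]) h he.symm

lemma selfLower_card (φ : Fin N → Fin n) (v : Fin n) (M : Equiv.Perm (Fin N))
    (hM : M ∈ matchings N) :
    2 * ((VS φ v).filter fun s => M s ∈ VS φ v ∧ M s < s).card ≤ (VS φ v).card := by
  classical
  set SL := (VS φ v).filter fun s => M s ∈ VS φ v ∧ M s < s with hSL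
  have him : SL.image M ⊆ VS φ v := by
    intro y hy
    obtain ⟨x, hx, rfl⟩ := mem_image.1 hy
    exact (mem_filter.1 hx).2.1
  have hdisj : Disjoint SL (SL.image M) := by
    rw [disjoint_left]
    intro x hxSL hxim
    obtain ⟨y, hy, hyx⟩ := mem_image.1 hxim
    have h1 : M x < x := (mem_filter.1 hxSL).2.2
    have h2 : M y < y := (mem_filter.1 hy).2.2
    have h3 : M x = y := by rw [← hyx, minv hM]
    rw [h3] at h1
    rw [hyx] at h2
    exact absurd h1 (not_lt.2 h2.le)
  have hcardim : (SL.image M).card = SL.card :=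
    Finset.card_image_of_injective _ M.injective
  have := Finset.card_union_of_disjoint hdisj
  have hsub : SL ∪ SL.image M ⊆ VS φ v := union_subset (filter_subset _ _) him
  have := Finset.card_le_card hsub
  omega

lemma badSet_V_card (φ : Fin N → Fin n) (v : Fin n) (M : Equiv.Perm (Fin N))
    (hM : M ∈ matchings N) :
    (VS φ v).card - (freshSet φ v M).card - (VS φ v).card / 2
      ≤ (badSet φ v (VS φ v) M).card := by
  classical
  set SL := (VS φ v).filter fun s => M s ∈ VS φ v ∧ M s < s with hSL
  have hNF : ((VS φ v).filter fun s => ¬ freshP φ v M s).card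
      = (VS φ v).card - (freshSet φ v M).card := by
    rw [Finset.filter_not]
    rw [Finset.card_sdiff_of_subset (filter_subset _ _)]
    rfl
  have hsub : ((VS φ v).filter fun s => ¬ freshP φ v M s) \ SL ⊆ badSet φ v (VS φ v) M := by
    intro x hx
    rw [mem_sdiff, mem_filter] at hx
    rw [badSet, mem_filter]
    refine ⟨hx.1.1, hx.1.2, ?_⟩
    intro hcon
    exact hx.2 (mem_filter.2 ⟨hx.1.1, by simpa [VS] using hcon.1, hcon.2⟩)
  have h1 := Finset.card_le_card hsub
  have h2 := Finset.le_card_sdiff SL ((VS φ v).filter fun s => ¬ freshP φ v M s)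
  have h3 : 2 * SL.card ≤ (VS φ v).card := by
    rw [hSL]; exact selfLower_card φ v M hM
  omega


lemma badSet_step (φ : Fin N → Fin n) (v : Fin n) (M : Equiv.Perm (Fin N))
    (hM : M ∈ matchings N) (U : Finset (Fin N)) (s : Fin N)
    (hsU : s ∈ U) (hmin : ∀ u ∈ U, s ≤ u) :
    (badSet φ v U M).card
      = (badSet φ v ((U.erase s).erase (M s)) M).card
        + (if freshP φ v M s then 0 else 1) := by
  classical
  have hMss : M s ≠ s := mne hM s
  have hsB : s ∈ badSet φ v U M ↔ ¬ freshP φ v M s := by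
    rw [badSet, mem_filter]
    constructor
    · tauto
    · intro hnf
      refine ⟨hsU, hnf, ?_⟩
      rintro ⟨h1, h2⟩
      exact absurd (hmin _ h1) (not_le.2 h2)
  have hBeq : badSet φ v ((U.erase s).erase (M s)) M = (badSet φ v U M).erase s := by
    ext u
    simp only [badSet, mem_filter, Finset.mem_erase]
    constructor
    · rintro ⟨⟨huMs, hus, huU⟩, hnf, hcond⟩
      have hMu1 : M u ≠ s := by
        intro h
        apply huMs
        rw [← h, minv hM]
      have hMu2 : M u ≠ M s := fun h => hus (M.injective h)
      refine ⟨hus, ⟨huU, hnf, ?_⟩⟩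
      rintro ⟨h1, h2⟩
      exact hcond ⟨⟨hMu2, hMu1, h1⟩, h2⟩
    · rintro ⟨hus, huU, hnf, hcond⟩
      have huMs : u ≠ M s := by
        intro h
        apply hcond
        have hMu : M u = s := by rw [h, minv hM]
        refine ⟨hMu ▸ hsU, ?_⟩
        rw [hMu]
        exact lt_of_le_of_ne (hmin _ huU) (Ne.symm hus)
      have hMu1 : M u ≠ s := by
        intro h
        apply huMs
        rw [← h, minv hM]
      have hMu2 : M u ≠ M s := fun h => hus (M.injective h)
      refine ⟨⟨huMs, hus, huU⟩, hnf, ?_⟩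
      rintro ⟨⟨_, _, h1⟩, h2⟩
      exact hcond ⟨h1, h2⟩
  rw [hBeq]
  by_cases hf : freshP φ v M s
  · rw [if_pos hf, Finset.erase_eq_of_notMem (fun h => (hsB.1 h) hf), add_zero]
  · rw [if_neg hf]
    have := Finset.card_erase_add_one (hsB.2 hf)
    omega


lemma rec_main (φ : Fin N → Fin n) (v : Fin n) (k : ℕ) (dv : ℕ) (q : ℝ)
    (hq0 : 0 ≤ q) (hq1 : q ≤ 1)
    (hdvN : 2 * dv + 1 ≤ N)
    (hA : ∀ W : Finset (Fin n), v ∉ W → W.card ≤ k →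
      ((univ.filter fun x : Fin N => φ x = v ∨ φ x ∈ W).card : ℝ)
        ≤ q * ((N - 2 * dv + 1 : ℕ) : ℝ)) :
    ∀ U : Finset (Fin N), ∀ M₀ ∈ matchings N, ∀ D : Finset (Fin N), ∀ b : ℕ,
      U ⊆ VS φ v → (∀ x ∈ D, M₀ x ∈ D) → Disjoint U D →
      D.card + 2 * U.card ≤ 2 * dv → VS φ v \ U ⊆ D →
      (((Ext M₀ D).filter (Evt φ v k U b)).card : ℝ)
        ≤ 2 ^ U.card * q ^ b * ((Ext M₀ D).card : ℝ) := by
  classical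
  intro U
  induction U using Finset.strongInduction with
  | _ U IH =>
  intro M₀ hM₀ D b hUV hcl hdisj hDcard hVU
  by_cases hUe : U = ∅
  · subst hUe
    rcases Nat.eq_zero_or_pos b with rfl | hb
    · have h1 := Finset.card_le_card (Finset.filter_subset (Evt φ v k (∅ : Finset (Fin N)) 0) (Ext M₀ D))
      simp only [card_empty, pow_zero, one_mul]
      exact_mod_cast h1
    · have hemp : (Ext M₀ D).filter (Evt φ v k (∅ : Finset (Fin N)) b) = ∅ := by
        rw [Finset.filter_eq_empty_iff]
        intro M _ hEvt
        have h2 := hEvt.2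
        simp only [badSet, Finset.filter_empty, Finset.card_empty] at h2
        omega
      rw [hemp]
      simp only [Finset.card_empty, Nat.cast_zero]
      positivity
  · have hUne : U.Nonempty := Finset.nonempty_iff_ne_empty.2 hUe
    set s := U.min' hUne with hs
    have hsU : s ∈ U := U.min'_mem hUne
    have hsV : s ∈ VS φ v := hUV hsU
    have hsD : s ∉ D := Finset.disjoint_left.1 hdisj hsU
    have hmin : ∀ u ∈ U, s ≤ u := fun u hu => U.min'_le u hu
    have hbelow : ∀ t ∈ VS φ v, t < s → t ∈ D := by
      intro t htV hts
      by_cases htU : t ∈ U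
      · exact absurd (hmin t htU) (not_le.2 hts)
      · exact hVU (Finset.mem_sdiff.2 ⟨htV, htU⟩)
    set HitB : Finset (Fin n)
      := (((VS φ v).filter fun t => t < s).image fun t => φ (M₀ t)).erase v with hHitB
    have hHagree : ∀ M ∈ Ext M₀ D,
        (((VS φ v).filter fun t => t < s).image fun t => φ (M t))
          = (((VS φ v).filter fun t => t < s).image fun t => φ (M₀ t)) := by
      intro M hM
      apply Finset.image_congr
      intro t ht
      rw [Finset.mem_coe, Finset.mem_filter] at ht
      show φ (M t) = φ (M₀ t)
      rw [(ext_mem.1 hM).2 t (hbelow t ht.1 ht.2)]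
    have hM₀sD : M₀ s ∉ D := by
      intro h
      have := hcl _ h
      rw [minv hM₀] at this
      exact hsD this
    have hM₀ss : M₀ s ≠ s := mne hM₀ s
    by_cases hHB : HitB.card ≤ k
    swap
    · -- the event is empty: too many vertices already hit
      have hemp : (Ext M₀ D).filter (Evt φ v k U b) = ∅ := by
        rw [Finset.filter_eq_empty_iff]
        intro M hME hEvt
        have h1 := card_image_le_fresh φ v M ((VS φ v).filter fun t => t < s)
          (Finset.filter_subset _ _) (by
            intro t htV a ha hta
            rw [Finset.mem_filter] at ha ⊢
            exact ⟨htV, lt_trans hta ha.2⟩)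
        rw [hHagree M hME] at h1
        rw [← hHitB] at h1
        exact hHB (le_trans h1 hEvt.1)
      rw [hemp]
      simp only [Finset.card_empty, Nat.cast_zero]
      positivity
    · -- main case
      set T : Finset (Fin N) := univ \ insert s D with hT
      have hTcard : T.card = N - D.card - 1 := by
        rw [hT, Finset.card_sdiff_of_subset (Finset.subset_univ _), Finset.card_univ,
          Fintype.card_fin, Finset.card_insert_of_notMem hsD]
        omega
      have hUc1 : 1 ≤ U.card := Finset.card_pos.2 hUne
      have hDub : D.card ≤ 2 * dv - 2 := by omega
      have hTlb : N - 2 * dv + 1 ≤ T.card := by omega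
      have hTpos : 0 < T.card := by omega
      set BadStubs := univ.filter fun x : Fin N => φ x = v ∨ φ x ∈ HitB with hBS
      have hBScard : ((BadStubs.card : ℝ)) ≤ q * ((N - 2 * dv + 1 : ℕ) : ℝ) :=
        hA HitB (Finset.notMem_erase _ _) hHB
      -- partition the event set according to M s
      have hmap : ∀ M ∈ (Ext M₀ D).filter (Evt φ v k U b), M s ∈ T := by
        intro M hM
        rw [Finset.mem_filter] at hM
        have h1 : M s ∉ D := ext_not_mem_D hcl hM.1 hsD
        have h2 : M s ≠ s := mne (ext_mem.1 hM.1).1 s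
        simp [hT, Finset.mem_sdiff, h1, h2]
      have hpart := Finset.card_eq_sum_card_fiberwise hmap
      -- per-fiber analysis
      have hfib : ∀ s' ∈ T,
          ((((Ext M₀ D).filter (Evt φ v k U b)).filter fun M => M s = s').card : ℝ)
            ≤ 2 ^ (U.card - 1) * q ^ (b - (if s' ∈ BadStubs then 1 else 0))
              * (((Ext M₀ D).card : ℝ) / (T.card : ℝ)) := by
        intro s' hs'T
        have hs'D : s' ∉ D := by
          simp only [hT, Finset.mem_sdiff, Finset.mem_insert] at hs'T
          tauto
        have hs's : s' ≠ s := by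
          simp only [hT, Finset.mem_sdiff, Finset.mem_insert] at hs'T
          tauto
        set σ' := Equiv.swap s' (M₀ s) with hσ'
        set M₁ := σ' * M₀ * σ' with hM₁
        have hM₁mem : M₁ ∈ matchings N := conj_mem_matchings hM₀ _ _
        have hσs : σ' s = s :=
          Equiv.swap_apply_of_ne_of_ne (Ne.symm hs's) (Ne.symm hM₀ss)
        have hσD : ∀ x ∈ D, σ' x = x := by
          intro x hx
          exact Equiv.swap_apply_of_ne_of_ne (by rintro rfl; exact hs'D hx)
            (by rintro rfl; exact hM₀sD hx)
        have hM₁s : M₁ s = s' := by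
          rw [hM₁, Equiv.Perm.mul_apply, Equiv.Perm.mul_apply, hσs, hσ', Equiv.swap_apply_right]
        have hM₁s' : M₁ s' = s := by
          have hswl : σ' s' = M₀ s := Equiv.swap_apply_left _ _
          simp only [hM₁, Equiv.Perm.mul_apply, hswl, minv hM₀, hσs]
        have hM₁D : ∀ x ∈ D, M₁ x = M₀ x := by
          intro x hx
          simp only [hM₁, Equiv.Perm.mul_apply, hσD x hx, hσD _ (hcl x hx)]
        set D' := insert s' (insert s D) with hD'
        set U' := (U.erase s).erase s' with hU'
        have hU'ss : U' ⊂ U :=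
          lt_of_le_of_lt (Finset.erase_subset _ _) (Finset.erase_ssubset hsU)
        have hs'iD : s' ∉ insert s D := by simp [Finset.mem_insert, hs's, hs'D]
        have hD'card : D'.card = D.card + 2 := by
          rw [hD', Finset.card_insert_of_notMem hs'iD, Finset.card_insert_of_notMem hsD]
        have hExt' : Ext M₁ D' = (Ext M₀ D).filter fun M => M s = s' := by
          ext M
          rw [Finset.mem_filter, ext_mem, ext_mem]
          constructor
          · rintro ⟨hMm, hMD'⟩
            refine ⟨⟨hMm, fun x hx => ?_⟩, ?_⟩
            · rw [hMD' x (by simp [hD', Finset.mem_insert, hx]), hM₁D x hx]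
            · rw [hMD' s (by simp [hD', Finset.mem_insert]), hM₁s]
          · rintro ⟨⟨hMm, hMD⟩, hMs⟩
            refine ⟨hMm, fun x hx => ?_⟩
            rw [hD', Finset.mem_insert, Finset.mem_insert] at hx
            rcases hx with rfl | rfl | hx
            · rw [hM₁s', ← hMs, minv hMm]
            · rw [hMs, hM₁s]
            · rw [hMD x hx, ← hM₁D x hx]
        have hcl' : ∀ x ∈ D', M₁ x ∈ D' := by
          intro x hx
          rw [hD', Finset.mem_insert, Finset.mem_insert] at hx
          rcases hx with rfl | rfl | hx
          · rw [hM₁s']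
            simp [hD', Finset.mem_insert]
          · rw [hM₁s]
            simp [hD', Finset.mem_insert]
          · rw [hM₁D x hx]
            simp [hD', Finset.mem_insert, hcl x hx]
        -- invariants for recursion
        have hUV' : U' ⊆ VS φ v := fun x hx => hUV (hU'ss.1 hx)
        have hdisj' : Disjoint U' D' := by
          rw [Finset.disjoint_left]
          intro x hxU' hxD'
          rw [hU', Finset.mem_erase, Finset.mem_erase] at hxU'
          rw [hD', Finset.mem_insert, Finset.mem_insert] at hxD'
          rcases hxD' with rfl | rfl | hxD
          · exact hxU'.1 rfl
          · exact hxU'.2.1 rfl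
          · exact Finset.disjoint_left.1 hdisj hxU'.2.2 hxD
        have hDcard' : D'.card + 2 * U'.card ≤ 2 * dv := by
          have h1 : U'.card ≤ U.card - 1 := by
            rw [hU']
            have := Finset.card_erase_le (s := U.erase s) (a := s')
            have := Finset.card_erase_of_mem hsU
            omega
          omega
        have hVU' : VS φ v \ U' ⊆ D' := by
          intro x hx
          rw [Finset.mem_sdiff] at hx
          by_cases hxU : x ∈ U
          · rw [hU', Finset.mem_erase, Finset.mem_erase] at hx
            rw [hD', Finset.mem_insert, Finset.mem_insert]
            by_cases h1 : x = s'
            · exact Or.inl h1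
            · by_cases h2 : x = s
              · exact Or.inr (Or.inl h2)
              · exact absurd ⟨h1, h2, hxU⟩ hx.2
          · exact Finset.mem_insert_of_mem (Finset.mem_insert_of_mem
              (hVU (Finset.mem_sdiff.2 ⟨hx.1, hxU⟩)))
        have hfr : ∀ M ∈ Ext M₁ D', (freshP φ v M s ↔ s' ∉ BadStubs) := by
          intro M hME
          have hMm : M ∈ matchings N := (ext_mem.1 hME).1
          have hMs : M s = s' := by
            rw [(ext_mem.1 hME).2 s (by simp [hD', Finset.mem_insert]), hM₁s]
          have hMD : ∀ x ∈ D, M x = M₀ x := by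
            intro x hx
            rw [(ext_mem.1 hME).2 x (by simp [hD', Finset.mem_insert, hx]), hM₁D x hx]
          have hBSmem : s' ∈ BadStubs ↔ (φ s' = v ∨ φ s' ∈ HitB) := by
            simp [hBS]
          constructor
          · intro hf hbad
            rw [hBSmem] at hbad
            rcases hbad with h1 | h1
            · exact hf.1 (hMs ▸ h1)
            · rw [hHitB, Finset.mem_erase, Finset.mem_image] at h1
              obtain ⟨t, ht, hφt⟩ := h1.2
              rw [Finset.mem_filter] at ht
              refine hf.2 t ht.1 ht.2 ?_
              rw [hMD t (hbelow t ht.1 ht.2), hφt, hMs]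
          · intro hbad
            rw [hBSmem] at hbad
            push_neg at hbad
            constructor
            · rw [hMs]; exact hbad.1
            · intro t htV hts heq
              apply hbad.2
              rw [hHitB, Finset.mem_erase, Finset.mem_image]
              refine ⟨hbad.1, t, Finset.mem_filter.2 ⟨htV, hts⟩, ?_⟩
              rw [← hMD t (hbelow t htV hts), heq, hMs]
        set c : ℕ := if s' ∈ BadStubs then 1 else 0 with hc
        -- the event fiber is exactly the event for the smaller instance
        have hfibEq : (((Ext M₀ D).filter (Evt φ v k U b)).filter fun M => M s = s')
            = (Ext M₁ D').filter (Evt φ v k U' (b - c)) := by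
          rw [Finset.filter_comm, ← hExt']
          apply Finset.filter_congr
          intro M hME
          have hMm : M ∈ matchings N := (ext_mem.1 hME).1
          have hMs : M s = s' := by
            rw [(ext_mem.1 hME).2 s (by simp [hD', Finset.mem_insert]), hM₁s]
          have hstep := badSet_step φ v M hMm U s hsU hmin
          rw [hMs] at hstep
          have hcval : (if freshP φ v M s then 0 else 1) = c := by
            by_cases hf : freshP φ v M s
            · rw [if_pos hf, hc, if_neg ((hfr M hME).1 hf)]
            · rw [if_neg hf, hc, if_pos (by
                by_contra hcon
                exact hf ((hfr M hME).2 hcon))]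
          rw [hcval] at hstep
          simp only [Evt, hU']
          constructor
          · rintro ⟨h1, h2⟩
            exact ⟨h1, by omega⟩
          · rintro ⟨h1, h2⟩
            refine ⟨h1, ?_⟩
            have hcle : c ≤ 1 := by rw [hc]; split <;> omega
            omega
        -- fiber cardinality via the exchange lemma
        have hfc := fiber_card M₀ hM₀ D hcl s hsD s' hs'D hs's
        have hXeq : T.card * (Ext M₁ D').card = (Ext M₀ D).card := by
          rw [hExt', hTcard]
          exact hfc
        have hTcne : ((T.card : ℕ) : ℝ) ≠ 0 := Nat.cast_ne_zero.2 (by omega)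
        have hXr : ((Ext M₁ D').card : ℝ)
            = ((Ext M₀ D).card : ℝ) / ((T.card : ℕ) : ℝ) := by
          rw [eq_div_iff hTcne, mul_comm]
          exact_mod_cast hXeq
        -- apply the induction hypothesis
        have hIH := IH U' hU'ss M₁ hM₁mem D' (b - c) hUV' hcl' hdisj' hDcard' hVU'
        rw [hfibEq]
        refine le_trans hIH ?_
        rw [hXr]
        have hpow2 : (2:ℝ) ^ U'.card ≤ 2 ^ (U.card - 1) := by
          apply pow_le_pow_right₀ (by norm_num)
          have h1 : U'.card ≤ U.card - 1 := by
            rw [hU']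
            have h2 := Finset.card_erase_le (s := U.erase s) (a := s')
            have h3 := Finset.card_erase_of_mem hsU
            omega
          exact h1
        have hqpow : (0:ℝ) ≤ q ^ (b - c) := pow_nonneg hq0 _
        have hdivpos : (0:ℝ) ≤ ((Ext M₀ D).card : ℝ) / ((T.card : ℕ) : ℝ) :=
          div_nonneg (Nat.cast_nonneg _) (Nat.cast_nonneg _)
        exact mul_le_mul_of_nonneg_right
          (mul_le_mul_of_nonneg_right hpow2 hqpow) hdivpos
      -- assemble the fiberwise bounds
      have hq' : q * q ^ (b - 1) ≤ q ^ b := by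
        rcases b with _ | bn
        · simpa using hq1
        · rw [Nat.succ_sub_one, pow_succ]
          exact le_of_eq (mul_comm _ _)
      set X := ((Ext M₀ D).card : ℝ) with hX
      have hX0 : (0:ℝ) ≤ X := Nat.cast_nonneg _
      set Tc := ((T.card : ℕ) : ℝ) with hTcr
      have hTc0 : (0:ℝ) < Tc := by rw [hTcr]; exact_mod_cast hTpos
      have hcastpart : (((Ext M₀ D).filter (Evt φ v k U b)).card : ℝ)
          = ∑ s' ∈ T, ((((Ext M₀ D).filter (Evt φ v k U b)).filter fun M => M s = s').card : ℝ) := by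
        exact_mod_cast hpart
      rw [hcastpart]
      have hstep1 : ∑ s' ∈ T,
          ((((Ext M₀ D).filter (Evt φ v k U b)).filter fun M => M s = s').card : ℝ)
          ≤ ∑ s' ∈ T, (2 ^ (U.card - 1) * q ^ (b - (if s' ∈ BadStubs then 1 else 0)) * (X / Tc)) :=
        Finset.sum_le_sum hfib
      refine le_trans hstep1 ?_
      have hfactor : ∑ s' ∈ T, (2 ^ (U.card - 1) * q ^ (b - (if s' ∈ BadStubs then 1 else 0)) * (X / Tc))
          = 2 ^ (U.card - 1) * (X / Tc) * ∑ s' ∈ T, q ^ (b - (if s' ∈ BadStubs then 1 else 0)) := by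
        rw [Finset.mul_sum]
        apply Finset.sum_congr rfl
        intro x _
        ring
      rw [hfactor]
      have hsplit : ∑ s' ∈ T, q ^ (b - (if s' ∈ BadStubs then 1 else 0))
          = ((T.filter fun s' => s' ∈ BadStubs).card : ℝ) * q ^ (b - 1)
            + ((T.filter fun s' => ¬ s' ∈ BadStubs).card : ℝ) * q ^ b := by
        rw [← Finset.sum_filter_add_sum_filter_not T (fun s' => s' ∈ BadStubs)]
        congr 1
        · rw [Finset.sum_congr rfl (fun x hx => by
            rw [if_pos (Finset.mem_filter.1 hx).2]), Finset.sum_const, nsmul_eq_mul]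
        · rw [Finset.sum_congr rfl (fun x hx => by
            rw [if_neg (Finset.mem_filter.1 hx).2, Nat.sub_zero]), Finset.sum_const, nsmul_eq_mul]
      rw [hsplit]
      have hTb : ((T.filter fun s' => s' ∈ BadStubs).card : ℝ) ≤ q * Tc := by
        have h1 : (T.filter fun s' => s' ∈ BadStubs) ⊆ BadStubs := by
          intro x hx
          exact (Finset.mem_filter.1 hx).2
        have h2 : ((T.filter fun s' => s' ∈ BadStubs).card : ℝ) ≤ (BadStubs.card : ℝ) := by
          exact_mod_cast Finset.card_le_card h1
        refine le_trans h2 (le_trans hBScard ?_)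
        have h3 : ((N - 2 * dv + 1 : ℕ) : ℝ) ≤ Tc := by
          rw [hTcr]; exact_mod_cast hTlb
        exact mul_le_mul_of_nonneg_left h3 hq0
      have hTg : ((T.filter fun s' => ¬ s' ∈ BadStubs).card : ℝ) ≤ Tc := by
        rw [hTcr]
        exact_mod_cast Finset.card_le_card (Finset.filter_subset _ _)
      have hqb0 : (0:ℝ) ≤ q ^ b := pow_nonneg hq0 _
      have hqb10 : (0:ℝ) ≤ q ^ (b - 1) := pow_nonneg hq0 _
      have hmain : 2 ^ (U.card - 1) * (X / Tc)
            * (((T.filter fun s' => s' ∈ BadStubs).card : ℝ) * q ^ (b - 1)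
              + ((T.filter fun s' => ¬ s' ∈ BadStubs).card : ℝ) * q ^ b)
          ≤ 2 ^ (U.card - 1) * (X / Tc) * ((q * Tc) * q ^ (b - 1) + Tc * q ^ b) := by
        have hpos : (0:ℝ) ≤ 2 ^ (U.card - 1) * (X / Tc) :=
          mul_nonneg (pow_nonneg (by norm_num) _) (div_nonneg hX0 (le_of_lt hTc0))
        apply mul_le_mul_of_nonneg_left _ hpos
        apply add_le_add
        · exact mul_le_mul_of_nonneg_right hTb hqb10
        · exact mul_le_mul_of_nonneg_right hTg hqb0
      refine le_trans hmain ?_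
      have heq2 : 2 ^ (U.card - 1) * (X / Tc) * ((q * Tc) * q ^ (b - 1) + Tc * q ^ b)
          = 2 ^ (U.card - 1) * X * (q * q ^ (b - 1) + q ^ b) := by
        rw [show 2 ^ (U.card - 1) * (X / Tc) * ((q * Tc) * q ^ (b - 1) + Tc * q ^ b)
            = 2 ^ (U.card - 1) * X * (q * q ^ (b - 1) + q ^ b) * (Tc / Tc) from by ring]
        rw [div_self (ne_of_gt hTc0), mul_one]
      rw [heq2]
      have hfin : 2 ^ (U.card - 1) * X * (q * q ^ (b - 1) + q ^ b)
          ≤ 2 ^ (U.card - 1) * X * (2 * q ^ b) := by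
        have hpos : (0:ℝ) ≤ 2 ^ (U.card - 1) * X :=
          mul_nonneg (pow_nonneg (by norm_num) _) hX0
        apply mul_le_mul_of_nonneg_left _ hpos
        have := hq'
        linarith
      refine le_trans hfin (le_of_eq ?_)
      have hUc : U.card - 1 + 1 = U.card := by omega
      have h2p : (2:ℝ) ^ (U.card - 1) * 2 = 2 ^ U.card := by
        rw [← pow_succ, hUc]
      rw [← h2p]
      ring

lemma deg_pos (φ : Fin N → Fin n) (v : Fin n) (M : Equiv.Perm (Fin N))
    (hM : M ∈ matchings N) (h1 : (VS φ v).card = 1) : 1 ≤ ecmDeg φ M v := by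
  classical
  obtain ⟨s, hsv⟩ := Finset.card_eq_one.1 h1
  have hsV : s ∈ VS φ v := by rw [hsv]; exact Finset.mem_singleton_self s
  have hφs : φ s = v := by
    rw [VS, Finset.mem_filter] at hsV
    exact hsV.2
  have hMs : M s ∉ VS φ v := by
    rw [hsv, Finset.mem_singleton]
    exact mne hM s
  have hune : φ (M s) ≠ v := by
    intro h
    exact hMs (by rw [VS, Finset.mem_filter]; exact ⟨Finset.mem_univ _, h⟩)
  have hne : (univ.filter fun u => ecmAdj φ M u v).Nonempty := by
    refine ⟨φ (M s), Finset.mem_filter.2 ⟨Finset.mem_univ _, hune, M s, rfl, ?_⟩⟩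
    rw [minv hM, hφs]
  exact Finset.card_pos.2 hne

lemma VS_card {d : Fin n → ℕ} {φ : Fin N → Fin n} (hstub : IsStubMap d φ) (v : Fin n) :
    (VS φ v).card = d v := hstub v

lemma Ext_empty (M₀ : Equiv.Perm (Fin N)) : Ext M₀ (∅ : Finset (Fin N)) = matchings N := by
  rw [Ext]
  apply Finset.filter_true_of_mem
  intro M _ x hx
  exact absurd hx (Finset.notMem_empty x)

lemma stub_count_sum (d : Fin n → ℕ) (φ : Fin N → Fin n) (hstub : IsStubMap d φ)
    (A : Finset (Fin n)) :
    (univ.filter fun x : Fin N => φ x ∈ A).card = ∑ u ∈ A, d u := by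
  classical
  rw [Finset.card_eq_sum_card_fiberwise (f := φ) (s := univ.filter fun x : Fin N => φ x ∈ A) (t := A)
    (fun x hx => (Finset.mem_filter.1 hx).2)]
  apply Finset.sum_congr rfl
  intro u hu
  rw [← hstub u]
  congr 1
  ext x
  simp only [Finset.mem_filter, Finset.mem_univ, true_and]
  constructor
  · rintro ⟨_, h⟩; exact h
  · intro h; exact ⟨h ▸ hu, h⟩

end ECMAux

/-- There exist constants `β, β' ∈ (0,1)` such that for every degree
sequence `d` with `∑ d_v = 2m` and `max d_v < √m / 2`, and every vertex `v`,
`P[D_v < β' d_v] < exp(-β d_v)` over `ECM(d)`.  (In fact one may take `β' = 1/8` and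
`β = 1/72`.) -/
theorem ecm_degree_lower_tail :
    ∃ β β' : ℝ, β ∈ Set.Ioo (0 : ℝ) 1 ∧ β' ∈ Set.Ioo (0 : ℝ) 1 ∧
      ∀ (n m : ℕ) (d : Fin n → ℕ) (φ : Fin (2 * m) → Fin n),
        (∀ v, 0 < d v) →
        (∑ v, d v) = 2 * m →
        (∀ v, (d v : ℝ) < Real.sqrt m / 2) →
        IsStubMap d φ →
        ∀ v, ecmProb (2 * m) (fun M => (ecmDeg φ M v : ℝ) < β' * d v) <
          Real.exp (-β * d v) := by
  classical
  refine ⟨1/72, 1/8, ⟨by norm_num, by norm_num⟩, ⟨by norm_num, by norm_num⟩, ?_⟩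
  intro n m d φ hd hsum hmax hstub v
  have hexp : 0 < Real.exp (-(1/72) * (d v : ℝ)) := Real.exp_pos _
  have hm0 : 0 < m := by
    rcases Nat.eq_zero_or_pos m with h0 | h
    · exfalso
      have h1 := hmax v
      rw [h0] at h1
      simp only [Nat.cast_zero, Real.sqrt_zero, zero_div] at h1
      have h2 : (0:ℝ) < (d v : ℝ) := by exact_mod_cast hd v
      linarith
    · exact h
  by_cases hdeq : d v = 1
  · -- degree-one vertices always have a neighbour
    have hemp : (matchings (2*m)).filter
        (fun M => (ecmDeg φ M v : ℝ) < 1/8 * (d v : ℝ)) = ∅ := by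
      rw [Finset.filter_eq_empty_iff]
      intro M hM hlt
      have h1 : 1 ≤ ecmDeg φ M v :=
        ECMAux.deg_pos φ v M hM (by rw [ECMAux.VS_card hstub v, hdeq])
      have h2 : (1:ℝ) ≤ (ecmDeg φ M v : ℝ) := by exact_mod_cast h1
      rw [hdeq] at hlt
      norm_num at hlt
      linarith
    rw [ecmProb, hemp]
    simp only [Finset.card_empty, Nat.cast_zero, zero_div]
    exact hexp
  · have hdv2 : 2 ≤ d v := by have := hd v; omega
    have hdv2r : (2:ℝ) ≤ (d v:ℝ) := by exact_mod_cast hdv2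
    have hmaxv := hmax v
    have hs4 : (4:ℝ) < Real.sqrt m := by linarith
    have hm1r : (1:ℝ) ≤ (m:ℝ) := by exact_mod_cast hm0
    have hsle : Real.sqrt m ≤ (m:ℝ) := by
      nlinarith [Real.sqrt_nonneg (m:ℝ), Real.sq_sqrt (le_trans zero_le_one hm1r : (0:ℝ) ≤ (m:ℝ))]
    have hdvm : 2 * d v + 1 ≤ 2 * m := by
      have h1 : 2 * (d v:ℝ) < (m:ℝ) := by linarith
      have h2 : ((2 * d v : ℕ):ℝ) < (m:ℝ) := by push_cast; linarith
      have h3 : 2 * d v < m := by exact_mod_cast h2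
      omega
    set k := (d v - 1) / 8 with hk
    set b₀ := d v - d v / 2 - k with hb₀
    have hmsq : Real.sqrt m * Real.sqrt m = (m:ℝ) := Real.mul_self_sqrt (Nat.cast_nonneg m)
    have hA : ∀ W : Finset (Fin n), v ∉ W → W.card ≤ k →
        ((univ.filter fun x : Fin (2*m) => φ x = v ∨ φ x ∈ W).card : ℝ)
          ≤ (1/10) * ((2*m - 2*(d v) + 1 : ℕ) : ℝ) := by
      intro W hvW hWk
      have he1 : (univ.filter fun x : Fin (2*m) => φ x = v ∨ φ x ∈ W)
          = (univ.filter fun x : Fin (2*m) => φ x ∈ insert v W) := by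
        apply Finset.filter_congr
        intro x _
        simp [Finset.mem_insert]
      rw [he1, ECMAux.stub_count_sum d φ hstub (insert v W), Finset.sum_insert hvW]
      have hsumW : (∑ u ∈ W, (d u:ℝ)) ≤ (W.card : ℝ) * (Real.sqrt m / 2) := by
        calc (∑ u ∈ W, (d u:ℝ)) ≤ ∑ u ∈ W, (Real.sqrt m / 2) :=
              Finset.sum_le_sum (fun u _ => le_of_lt (hmax u))
          _ = W.card * (Real.sqrt m/2) := by rw [Finset.sum_const, nsmul_eq_mul]
      have hcast : ((d v + ∑ u ∈ W, d u : ℕ) : ℝ) = (d v:ℝ) + ∑ u ∈ W, (d u:ℝ) := by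
        push_cast
        ring
      rw [hcast]
      have hkr : (k:ℝ) ≤ ((d v:ℝ) - 1)/8 := by
        rw [hk]
        refine le_trans (Nat.cast_div_le) ?_
        rw [Nat.cast_sub (hd v)]
        norm_num
      have hWkr : (W.card:ℝ) ≤ (k:ℝ) := by exact_mod_cast hWk
      have hcast2 : ((2*m - 2*(d v) + 1 : ℕ):ℝ) = 2*(m:ℝ) - 2*(d v:ℝ) + 1 := by
        have h2 : 2 * d v ≤ 2 * m := by omega
        rw [Nat.cast_add, Nat.cast_sub h2]
        push_cast
        ring
      rw [hcast2]
      have hx0 : (0:ℝ) ≤ Real.sqrt m := Real.sqrt_nonneg m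
      have hWc2 : (W.card:ℝ) * (Real.sqrt m / 2) ≤ ((d v:ℝ) - 1)/8 * (Real.sqrt m / 2) :=
        mul_le_mul_of_nonneg_right (le_trans hWkr hkr) (by linarith)
      nlinarith [hsumW, hmaxv, hs4, hmsq, hdv2r, hWc2, hx0]
    have hVcard : (ECMAux.VS φ v).card = d v := ECMAux.VS_card hstub v
    have hrec := ECMAux.rec_main (N := 2*m) φ v k (d v) (1/10) (by norm_num) (by norm_num)
      hdvm hA (ECMAux.VS φ v) (ECMAux.baseMatch m hm0) (ECMAux.baseMatch_mem m hm0) ∅ b₀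
      (subset_refl _) (by intro x hx; exact absurd hx (Finset.notMem_empty x))
      (Finset.disjoint_empty_right _)
      (by simp [hVcard]) (by simp)
    rw [ECMAux.Ext_empty, hVcard] at hrec
    have hsub : (matchings (2*m)).filter (fun M => (ecmDeg φ M v : ℝ) < 1/8 * (d v:ℝ))
        ⊆ (matchings (2*m)).filter (ECMAux.Evt φ v k (ECMAux.VS φ v) b₀) := by
      intro M hM
      rw [Finset.mem_filter] at hM ⊢
      have hdeg8 : 8 * ecmDeg φ M v < d v := by
        have h2 := hM.2
        have h3 : ((8 * ecmDeg φ M v : ℕ):ℝ) < (d v:ℝ) := by push_cast; linarith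
        exact_mod_cast h3
      have hfd := ECMAux.fresh_card_le_deg φ v M hM.1
      have hfk : (ECMAux.freshSet φ v M).card ≤ k := by omega
      refine ⟨hM.1, hfk, ?_⟩
      have hbadc := ECMAux.badSet_V_card φ v M hM.1
      rw [hVcard] at hbadc
      omega
    have hcardle : (((matchings (2*m)).filter
          (fun M => (ecmDeg φ M v:ℝ) < 1/8*(d v:ℝ))).card : ℝ)
        ≤ (((matchings (2*m)).filter (ECMAux.Evt φ v k (ECMAux.VS φ v) b₀)).card : ℝ) := by
      exact_mod_cast Finset.card_le_card hsub
    have hMpos : (0:ℝ) < ((matchings (2*m)).card : ℝ) := by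
      have hne : (matchings (2*m)).Nonempty := ⟨_, ECMAux.baseMatch_mem m hm0⟩
      exact_mod_cast Finset.card_pos.2 hne
    -- numeric bound
    have h8b : 3 * d v + 1 ≤ 8 * b₀ := by omega
    have hdv0 : d v ≠ 0 := by omega
    have hbase : (32/125 : ℝ) < Real.exp (-(1/9)) := by
      rw [Real.exp_neg]
      have h1 : Real.exp (1/9 : ℝ) < 125/32 := by
        have h2 : Real.exp (1/9 : ℝ) ≤ Real.exp 1 := Real.exp_le_exp.2 (by norm_num)
        have h3 := Real.exp_one_lt_d9
        linarith
      have h4 := inv_strictAnti₀ (Real.exp_pos (1/9 : ℝ)) h1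
      calc (32/125:ℝ) = ((125:ℝ)/32)⁻¹ := by norm_num
        _ < (Real.exp (1/9))⁻¹ := h4
    have hnum : (2:ℝ)^(d v) * (1/10:ℝ)^b₀ < Real.exp (-(1/72)*(d v:ℝ)) := by
      have hA8 : ((2:ℝ)^(d v) * (1/10:ℝ)^b₀)^8 < (Real.exp (-(1/72)*(d v:ℝ)))^8 := by
        have e1 : ((2:ℝ)^(d v) * (1/10:ℝ)^b₀)^8 = (2:ℝ)^(d v * 8) * (1/10:ℝ)^(b₀ * 8) := by
          rw [mul_pow, ← pow_mul, ← pow_mul]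
        rw [e1]
        have e2 : (1/10:ℝ)^(b₀*8) ≤ (1/10:ℝ)^(3*(d v)) :=
          pow_le_pow_of_le_one (by norm_num) (by norm_num) (by omega)
        have e3 : (2:ℝ)^(d v * 8) * (1/10:ℝ)^(b₀*8)
            ≤ (2:ℝ)^(d v * 8) * (1/10:ℝ)^(3*(d v)) :=
          mul_le_mul_of_nonneg_left e2 (pow_nonneg (by norm_num) _)
        refine lt_of_le_of_lt e3 ?_
        have e4 : (2:ℝ)^(d v * 8) * (1/10:ℝ)^(3*(d v)) = (32/125:ℝ)^(d v) := by
          rw [show (32/125:ℝ) = 2^8 * (1/10:ℝ)^3 from by norm_num, mul_pow,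
            ← pow_mul, ← pow_mul, Nat.mul_comm (d v) 8]
        rw [e4]
        have e5 : (Real.exp (-(1/72)*(d v:ℝ)))^8 = (Real.exp (-(1/9)))^(d v) := by
          rw [← Real.exp_nat_mul]
          rw [show ((8:ℕ):ℝ) * (-(1/72)*(d v:ℝ)) = ((d v : ℕ):ℝ) * (-(1/9)) from by
            push_cast; ring]
          rw [Real.exp_nat_mul]
        rw [e5]
        exact pow_lt_pow_left₀ hbase (by norm_num) hdv0
      have hexp0 : (0:ℝ) ≤ Real.exp (-(1/72)*(d v:ℝ)) := le_of_lt hexp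
      exact lt_of_pow_lt_pow_left₀ 8 hexp0 hA8
    -- put everything together
    rw [ecmProb, div_lt_iff₀ hMpos]
    calc (((matchings (2*m)).filter (fun M => (ecmDeg φ M v:ℝ) < 1/8*(d v:ℝ))).card : ℝ)
        ≤ (((matchings (2*m)).filter (ECMAux.Evt φ v k (ECMAux.VS φ v) b₀)).card : ℝ) :=
          hcardle
      _ ≤ 2^(d v) * (1/10:ℝ)^b₀ * ((matchings (2*m)).card : ℝ) := hrec
      _ < Real.exp (-(1/72)*(d v:ℝ)) * ((matchings (2*m)).card : ℝ) :=
          mul_lt_mul_of_pos_right hnum hMpos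
end
end
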